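/- arXiv:1101.2239 — 9 statements merged into one kernel-verified Lean document; each statement's English description precedes it below -/
import Mathlib

section
/- Let F be a contravariant functor from the category of (unital, associative, possibly noncommutative) rings to the category of sets such that the restriction of F to the full subcategory of commutative rings is naturally isomorphic to the prime spectrum functor Spec. Then for every natural number n ≥ 3, the set F(Mₙ(ℂ)) is empty, where Mₙ(ℂ) denotes the ring of n × n complex matrices (Matrix (Fin n) (Fin n) ℂ). -/
/-!
A point `x ∈ F(R)` yields, through `F` and the isomorphism with `Spec`, a prime ideal of every
commutative ring `A` equipped with a ring map `A → R`, and these primes are compatible with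
composition. Testing on `ℤ[X] → R, X ↦ a` assembles them into a single subset `P ⊆ R` whose
preimage under every such map is the corresponding prime. Since a prime of a commutative ring
omits exactly one member of a complete family of orthogonal idempotents, so does `P` for any such
family in `R`: a Kochen–Specker colouring of the idempotents of `R`. For `R = Mₙ(ℂ)`, `n ≥ 3`,
choose a diagonal unit `Eᵢᵢ ∉ P` and a `3 × 3` corner through `i`; then `P` colours the complete
triples of idempotents of `M₃(ℤ)` with `E₀₀` coloured, which a finite configuration forbids.
-/

open CategoryTheory

/-- The prime spectrum, as a contravariant functor from commutative rings to sets. -/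
def SpecFunctor : CommRingCatᵒᵖ ⥤ Type where
  obj C := PrimeSpectrum C.unop
  map f := TypeCat.ofHom fun P => ⟨P.asIdeal.comap f.unop.hom, P.isPrime.comap _⟩

namespace CompleteOrthogonalIdempotents

theorem existsUnique_notMem {A : Type*} [CommRing A] {I : Type*} [Fintype I] {e : I → A}
    (he : CompleteOrthogonalIdempotents e) (P : Ideal A) [hP : P.IsPrime] : ∃! i, e i ∉ P := by
  obtain ⟨i, hi⟩ : ∃ i, e i ∉ P := by
    by_contra! hall
    exact hP.ne_top (P.eq_top_of_isUnit_mem (he.complete ▸ P.sum_mem fun i _ ↦ hall i) isUnit_one)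
  refine ⟨i, hi, fun j hj ↦ by_contra fun hji ↦ ?_⟩
  have : e j * e i ∈ P := he.ortho hji ▸ P.zero_mem
  exact (hP.mem_or_mem this).elim hj hi

section Ring

variable {R : Type*} [Ring R] {I : Type*} [Fintype I] {e : I → R}

def piIntHom [DecidableEq I] (he : CompleteOrthogonalIdempotents e) : (I → ℤ) →+* R where
  toFun c := ∑ i, (c i : R) * e i
  map_one' := by simp [he.complete]
  map_mul' a b := by
    have hmul (i j : I) : (a i : R) * e i * (b j * e j) = ((a i * b j : ℤ) : R) * (e i * e j) := by
      rw [Int.cast_mul, mul_assoc, ← mul_assoc (e i), ← Int.cast_comm, mul_assoc, mul_assoc]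
    simp [Finset.sum_mul_sum, hmul, he.mul_eq]
  map_zero' := by simp
  map_add' a b := by simp [add_mul, Finset.sum_add_distrib]

theorem piIntHom_single [DecidableEq I] (he : CompleteOrthogonalIdempotents e) (i : I) :
    he.piIntHom (Pi.single i 1) = e i := by
  simp [piIntHom, Pi.single_apply]

theorem map_nonUnitalRingHom_option {S : Type*} [Ring S] (φ : R →ₙ+* S)
    (he : CompleteOrthogonalIdempotents e) :
    CompleteOrthogonalIdempotents (Option.elim · (1 - φ 1) (φ ∘ e)) := by
  have hφe : OrthogonalIdempotents (φ ∘ e) :=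
    ⟨fun i ↦ (he.idem i).map φ, fun i j hij ↦ by simp [← map_mul, he.ortho hij]⟩
  simpa [← map_sum, he.complete] using CompleteOrthogonalIdempotents.option hφe

theorem triple_iff {a b c : R} :
    CompleteOrthogonalIdempotents ![a, b, c] ↔
      (a * b = 0 ∧ a * c = 0 ∧ b * a = 0 ∧ b * c = 0 ∧ c * a = 0 ∧ c * b = 0) ∧ a + b + c = 1 := by
  simp [iff_ortho_complete, _root_.Pairwise, Fin.forall_fin_succ, Fin.sum_univ_three, and_assoc]

end Ring

end CompleteOrthogonalIdempotents

namespace SpecFunctor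

open Opposite Polynomial

variable {F : RingCatᵒᵖ ⥤ Type} (η : (forget₂ CommRingCat RingCat).op ⋙ F ⟶ SpecFunctor)
  {R : Type} [Ring R] (x : F.obj (op (RingCat.of R)))

def pullbackPoint {A : Type} [CommRing A] (f : A →+* R) : PrimeSpectrum A :=
  η.app (op (CommRingCat.of A)) (F.map (RingCat.ofHom f).op x)

theorem pullbackPoint_comp {A B : Type} [CommRing A] [CommRing B] (f : B →+* R) (g : A →+* B) :
    (pullbackPoint η x (f.comp g)).asIdeal = (pullbackPoint η x f).asIdeal.comap g := by
  unfold pullbackPoint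
  rw [RingCat.ofHom_comp, op_comp, F.map_comp, types_comp_apply]
  exact congrArg PrimeSpectrum.asIdeal
    (NatTrans.naturality_apply η (CommRingCat.ofHom g).op (F.map (RingCat.ofHom f).op x))

/-- Reyes' prime partial ideal of `x`: `a ∈ P` iff `X` lies in the prime of `ℤ[X]` obtained by
pulling `x` back along `X ↦ a`. -/
def primePartialIdeal : Set R :=
  {a | X ∈ (pullbackPoint η x (aeval (R := ℤ) a).toRingHom).asIdeal}

theorem apply_mem_primePartialIdeal_iff {A : Type} [CommRing A] (f : A →+* R) (a : A) :
    f a ∈ primePartialIdeal η x ↔ a ∈ (pullbackPoint η x f).asIdeal := by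
  have : (aeval (R := ℤ) (f a)).toRingHom = f.comp (aeval (R := ℤ) a).toRingHom :=
    ringHom_ext (by simp) (by simp)
  change X ∈ (pullbackPoint η x (aeval (R := ℤ) (f a)).toRingHom).asIdeal ↔ _
  rw [this, pullbackPoint_comp]
  simp

theorem existsUnique_notMem_primePartialIdeal {I : Type} [Fintype I] {e : I → R}
    (he : CompleteOrthogonalIdempotents e) : ∃! i, e i ∉ primePartialIdeal η x := by
  classical
  simp_rw [← he.piIntHom_single, apply_mem_primePartialIdeal_iff]
  exact (CompleteOrthogonalIdempotents.single fun _ ↦ ℤ).existsUnique_notMem _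

variable {S : Type*} [Ring S] (φ : S →ₙ+* R) {I : Type} [Fintype I] {e : I → S}

theorem one_sub_map_one_mem_primePartialIdeal (he : CompleteOrthogonalIdempotents e) {i : I}
    (hi : φ (e i) ∉ primePartialIdeal η x) : 1 - φ 1 ∈ primePartialIdeal η x := by
  obtain ⟨o, -, huniq⟩ :=
    existsUnique_notMem_primePartialIdeal η x (he.map_nonUnitalRingHom_option φ)
  by_contra hq
  exact Option.some_ne_none i ((huniq (some i) hi).trans (huniq none hq).symm)

theorem existsUnique_map_notMem_primePartialIdeal (he : CompleteOrthogonalIdempotents e)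
    (hq : 1 - φ 1 ∈ primePartialIdeal η x) : ∃! i, φ (e i) ∉ primePartialIdeal η x := by
  obtain ⟨o, ho, huniq⟩ :=
    existsUnique_notMem_primePartialIdeal η x (he.map_nonUnitalRingHom_option φ)
  cases o with
  | none => exact absurd hq ho
  | some i => exact ⟨i, ho, fun j hj ↦ Option.some_injective _ (huniq (some j) hj)⟩

end SpecFunctor

namespace Matrix

variable {m n α : Type*} [Fintype m] [Fintype n] [DecidableEq m] [DecidableEq n] [Semiring α]

theorem completeOrthogonalIdempotents_single :
    CompleteOrthogonalIdempotents fun i : n ↦ single i i (1 : α) :=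
  CompleteOrthogonalIdempotents.iff_ortho_complete.2
    ⟨fun _ _ hij ↦ single_mul_single_of_ne _ _ _ _ hij _, sum_single_one⟩

def cornerHom (ι : m ↪ n) : Matrix m m α →ₙ+* Matrix n n α where
  toFun A := (1 : Matrix n n α).submatrix id ι * A * (1 : Matrix n n α).submatrix ι id
  map_mul' A B := by
    have : (1 : Matrix n n α).submatrix ι id * (1 : Matrix n n α).submatrix id ι = 1 := by
      rw [← submatrix_mul _ _ _ _ _ Function.bijective_id, Matrix.one_mul,
        submatrix_one_embedding]
    simp only [Matrix.mul_assoc]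
    rw [← Matrix.mul_assoc ((1 : Matrix n n α).submatrix ι id), this, Matrix.one_mul]
  map_zero' := by simp
  map_add' A B := by simp [Matrix.mul_add, Matrix.add_mul]

theorem cornerHom_apply (ι : m ↪ n) (A : Matrix m m α) :
    cornerHom ι A = (1 : Matrix n n α).submatrix id ι * A * (1 : Matrix n n α).submatrix ι id :=
  rfl

theorem cornerHom_single (ι : m ↪ n) (k l : m) (a : α) :
    cornerHom ι (single k l a) = single (ι k) (ι l) a := by
  ext i j
  simp only [cornerHom_apply, mul_apply, submatrix_apply, one_apply, single_apply, id]
  rw [Finset.sum_eq_single l (by intro b _ hb; simp [hb.symm]) (by simp),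
    Finset.sum_eq_single k (by intro b _ hb; simp [hb.symm]) (by simp)]
  split_ifs <;> simp_all [eq_comm]

end Matrix

theorem ExistsUnique.fin_three {P : Fin 3 → Prop} (h : ∃! i, P i) :
    (P 0 ∨ P 1 ∨ P 2) ∧ ¬(P 0 ∧ P 1) ∧ ¬(P 0 ∧ P 2) ∧ ¬(P 1 ∧ P 2) := by
  obtain ⟨i, hi, huniq⟩ := h
  refine ⟨by fin_cases i <;> simp_all, ?_, ?_, ?_⟩ <;> rintro ⟨h₁, h₂⟩ <;>
    exact absurd ((huniq _ h₁).trans (huniq _ h₂).symm) (by decide)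

theorem Matrix.not_exists_valuation_idempotents :
    ¬ ∃ v : Matrix (Fin 3) (Fin 3) ℤ → Prop, v (single 0 0 1) ∧
      ∀ e : Fin 3 → Matrix (Fin 3) (Fin 3) ℤ, CompleteOrthogonalIdempotents e → ∃! i, v (e i) := by
  rintro ⟨v, h₀, hv⟩
  have hv₃ a b c (h : (a * b = 0 ∧ a * c = 0 ∧ b * a = 0 ∧ b * c = 0 ∧ c * a = 0 ∧ c * b = 0) ∧
      a + b + c = 1) :
      (v a ∨ v b ∨ v c) ∧ ¬(v a ∧ v b) ∧ ¬(v a ∧ v c) ∧ ¬(v b ∧ v c) :=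
    (hv ![a, b, c] (CompleteOrthogonalIdempotents.triple_iff.2 h)).fin_three
  rw [show single 0 0 1 = !![(1 : ℤ), 0, 0; 0, 0, 0; 0, 0, 0] by decide] at h₀
  -- 18 complete triples of rank-one idempotents `u wᵀ` (`wᵀ u = 1`, `u, w ∈ {-1, 0, 1}³`),
  -- found by a SAT search; no `v` picks exactly one member of each, a finite case analysis.
  have := hv₃ !![1,1,0;0,0,0;1,1,0] !![-1,-1,1;1,1,-1;-1,-1,1] !![1,0,-1;-1,0,1;0,0,0] (by decide)
  have := hv₃ !![1,0,0;0,0,0;1,0,0] !![0,0,0;0,1,0;0,-1,0] !![0,0,0;0,0,0;-1,1,1] (by decide)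
  have := hv₃ !![0,0,1;0,0,0;0,0,1] !![1,0,-1;-1,0,1;0,0,0] !![0,0,0;1,1,-1;0,0,0] (by decide)
  have := hv₃ !![0,1,1;0,0,0;0,1,1] !![1,0,-1;0,0,0;0,0,0] !![0,-1,0;0,1,0;0,-1,0] (by decide)
  have := hv₃ !![1,0,0;1,0,0;0,0,0] !![0,0,0;-1,1,0;1,-1,0] !![0,0,0;0,0,0;-1,1,1] (by decide)
  have := hv₃ !![1,0,0;0,0,0;0,0,0] !![0,0,0;0,1,0;0,0,0] !![0,0,0;0,0,0;0,0,1] (by decide)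
  have := hv₃ !![1,0,0;1,0,0;1,0,0] !![0,0,0;-1,0,1;-1,0,1] !![0,0,0;0,1,-1;0,0,0] (by decide)
  have := hv₃ !![0,0,1;0,0,1;0,0,1] !![1,0,-1;0,0,0;0,0,0] !![0,0,0;0,1,-1;0,0,0] (by decide)
  have := hv₃ !![0,1,0;0,1,0;0,0,0] !![0,0,1;0,0,0;0,0,1] !![1,-1,-1;0,0,0;0,0,0] (by decide)
  have := hv₃ !![1,0,0;0,0,0;0,0,0] !![0,0,0;0,1,0;0,-1,0] !![0,0,0;0,0,0;0,1,1] (by decide)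
  have := hv₃ !![0,1,1;0,0,0;0,1,1] !![1,-1,-1;0,0,0;0,0,0] !![0,0,0;0,1,0;0,-1,0] (by decide)
  have := hv₃ !![1,0,0;0,0,0;0,0,0] !![0,0,0;0,0,1;0,0,1] !![0,0,0;0,1,-1;0,0,0] (by decide)
  have := hv₃ !![1,0,0;0,0,0;1,0,0] !![0,0,0;-1,0,1;-1,0,1] !![0,0,0;1,1,-1;0,0,0] (by decide)
  have := hv₃ !![1,0,0;1,0,0;1,0,0] !![0,0,0;-1,1,0;0,0,0] !![0,0,0;0,0,0;-1,0,1] (by decide)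
  have := hv₃ !![1,1,0;0,0,0;1,1,0] !![0,-1,0;0,1,0;0,-1,0] !![0,0,0;0,0,0;-1,0,1] (by decide)
  have := hv₃ !![1,0,0;1,0,0;0,0,0] !![0,0,0;-1,1,0;0,0,0] !![0,0,0;0,0,0;0,0,1] (by decide)
  have := hv₃ !![0,1,0;0,1,0;0,0,0] !![1,-1,0;0,0,0;0,0,0] !![0,0,0;0,0,0;0,0,1] (by decide)
  have := hv₃ !![0,0,1;0,0,1;0,0,1] !![0,1,-1;0,1,-1;0,0,0] !![1,-1,0;0,0,0;0,0,0] (by decide)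
  grind

open SpecFunctor Matrix in
/-- If `F` is a contravariant functor from rings to sets whose restriction to the full
subcategory of commutative rings is (naturally) isomorphic to the prime spectrum functor
`Spec`, then `F (Mₙ(ℂ)) = ∅` for every `n ≥ 3`. -/
theorem empty_spec_of_matrix (F : RingCatᵒᵖ ⥤ Type)
    (h : (forget₂ CommRingCat RingCat).op ⋙ F ≅ SpecFunctor)
    (n : ℕ) (hn : 3 ≤ n) :
    IsEmpty (F.obj (Opposite.op (RingCat.of (Matrix (Fin n) (Fin n) ℂ)))) := by
  refine ⟨fun x ↦ ?_⟩
  set P := primePartialIdeal h.hom x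
  obtain ⟨i₀, hi₀, -⟩ := existsUnique_notMem_primePartialIdeal h.hom x
    (completeOrthogonalIdempotents_single (n := Fin n) (α := ℂ))
  let ι : Fin 3 ↪ Fin n := (Fin.castLEEmb hn).trans (Equiv.swap (Fin.castLE hn 0) i₀).toEmbedding
  let φ := (cornerHom ι).comp
    ((Int.castRingHom ℂ).mapMatrix : Matrix (Fin 3) (Fin 3) ℤ →+* _).toNonUnitalRingHom
  have h₀ : φ (single 0 0 1) ∉ P := by
    change cornerHom ι ((single 0 0 (1 : ℤ)).map (Int.castRingHom ℂ)) ∉ P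
    rwa [map_single, map_one, cornerHom_single, show ι 0 = i₀ by simp [ι]]
  have hq : 1 - φ 1 ∈ P :=
    one_sub_map_one_mem_primePartialIdeal h.hom x φ completeOrthogonalIdempotents_single h₀
  exact not_exists_valuation_idempotents ⟨fun A ↦ φ A ∉ P, h₀,
    fun e he ↦ existsUnique_map_notMem_primePartialIdeal h.hom x φ he hq⟩
end

section
/- Let f : R → S be a (unital) ring homomorphism between possibly noncommutative rings, and let P be a prime partial ideal of S. Then the preimage f⁻¹(P) ⊆ R is a prime partial ideal of R. -/
/-- A partial ideal of a (possibly noncommutative) ring `R`: a subset whose intersection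
with every commutative subring is an ideal of that subring; elementwise, it contains `0`,
is closed under sums of commuting members, and absorbs products by commuting elements. -/
def IsPartialIdeal {R : Type*} [Ring R] (I : Set R) : Prop :=
  (0 : R) ∈ I ∧
  (∀ a b : R, a * b = b * a → a ∈ I → b ∈ I → a + b ∈ I) ∧
  (∀ a b : R, a * b = b * a → b ∈ I → a * b ∈ I)

/-- A prime partial ideal: a proper partial ideal `P` such that for commuting `x, y`,
`x * y ∈ P` implies `x ∈ P` or `y ∈ P`. -/
def IsPrimePartialIdeal {R : Type*} [Ring R] (P : Set R) : Prop :=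
  IsPartialIdeal P ∧ P ≠ Set.univ ∧
  ∀ x y : R, x * y = y * x → x * y ∈ P → x ∈ P ∨ y ∈ P

/-- A morphism of partial `k`-algebras from a (possibly noncommutative) `k`-algebra `R`
to `k`. -/
def IsPartialAlgHom (k : Type*) {R : Type*} [CommRing k] [Ring R] [Algebra k R]
    (f : R → k) : Prop :=
  f 0 = 0 ∧ f 1 = 1 ∧
  (∀ (c : k) (a : R), f (c • a) = c * f a) ∧
  (∀ a b : R, a * b = b * a → f (a + b) = f a + f b) ∧
  (∀ a b : R, a * b = b * a → f (a * b) = f a * f b)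

/-- The preimage of a prime partial ideal under a ring homomorphism is a prime
partial ideal. -/
theorem isPrimePartialIdeal_preimage {R S : Type*} [Ring R] [Ring S] (f : R →+* S)
    (P : Set S) (hP : IsPrimePartialIdeal P) : IsPrimePartialIdeal (f ⁻¹' P) := by
  obtain ⟨⟨h0, hadd, hmul⟩, hne, hprime⟩ := hP
  have h1 : (1 : S) ∉ P := by
    intro h1
    apply hne
    ext s
    simp only [Set.mem_univ, iff_true]
    have := hmul s 1 (by rw [mul_one, one_mul]) h1
    simpa using this
  refine ⟨⟨by simpa using h0, ?_, ?_⟩, ?_, ?_⟩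
  · intro a b hc ha hb
    simp only [Set.mem_preimage, map_add]
    exact hadd _ _ (by rw [← map_mul, ← map_mul, hc]) ha hb
  · intro a b hc hb
    simp only [Set.mem_preimage, map_mul]
    exact hmul _ _ (by rw [← map_mul, ← map_mul, hc]) hb
  · intro h
    apply h1
    have : (1 : R) ∈ f ⁻¹' P := h ▸ Set.mem_univ _
    simpa using this
  · intro x y hc hxy
    exact hprime _ _ (by rw [← map_mul, ← map_mul, hc]) (by simpa using hxy)
end

section
/- Let pSpec denote the contravariant functor from rings to sets sending each ring R to its set of prime partial ideals and each ring homomorphism f : R → S to the map P ↦ f⁻¹(P). Then pSpec, together with the identity natural transformation on its restriction to commutative rings (this restriction equals the prime spectrum functor Spec), is the right Kan extension of Spec along the inclusion of the opposite category of commutative rings into the opposite category of rings. Equivalently and concretely: for every contravariant functor F from rings to sets and every natural transformation η from the restriction of F to commutative rings to Spec, there exists a unique natural transformation δ : F → pSpec whose restriction to commutative rings equals η. -/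
open CategoryTheory


theorem IsPrimePartialIdeal.one_not_mem {R : Type*} [Ring R] {P : Set R}
    (hP : IsPrimePartialIdeal P) : (1 : R) ∉ P := by
  intro h1
  apply hP.2.1
  ext a
  simp only [Set.mem_univ, iff_true]
  simpa using hP.1.2.2 a 1 (by rw [mul_one, one_mul]) h1

theorem IsPrimePartialIdeal.preimage {R S : Type*} [Ring R] [Ring S] (f : R →+* S)
    {P : Set S} (hP : IsPrimePartialIdeal P) : IsPrimePartialIdeal (f ⁻¹' P) := by
  obtain ⟨⟨h0, hadd, hmul⟩, hne, hpr⟩ := hP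
  refine ⟨⟨by simp [Set.mem_preimage, h0], ?_, ?_⟩, ?_, ?_⟩
  · intro a b hc ha hb
    simpa [Set.mem_preimage, map_add] using
      hadd (f a) (f b) (by rw [← map_mul, ← map_mul, hc]) ha hb
  · intro a b hc hb
    simpa [Set.mem_preimage, map_mul] using
      hmul (f a) (f b) (by rw [← map_mul, ← map_mul, hc]) hb
  · intro h
    have h1 : (1 : R) ∈ f ⁻¹' P := h ▸ Set.mem_univ _
    exact IsPrimePartialIdeal.one_not_mem ⟨⟨h0, hadd, hmul⟩, hne, hpr⟩ (by simpa using h1)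
  · intro x y hc hxy
    exact hpr (f x) (f y) (by rw [← map_mul, ← map_mul, hc])
      (by simpa [Set.mem_preimage, map_mul] using hxy)

/-- The prime partial ideal spectrum, as a contravariant functor from (possibly
noncommutative) rings to sets. -/
def pSpec : RingCatᵒᵖ ⥤ Type where
  obj R := {P : Set ↥R.unop // IsPrimePartialIdeal P}
  map f := TypeCat.ofHom fun P => ⟨f.unop.hom ⁻¹' P.1, P.2.preimage f.unop.hom⟩

/-- In a commutative ring, a prime partial ideal is a prime ideal. -/
def toPrimeSpectrum {C : Type*} [CommRing C] (P : {P : Set C // IsPrimePartialIdeal P}) :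
    PrimeSpectrum C where
  asIdeal :=
    { carrier := P.1
      zero_mem' := P.2.1.1
      add_mem' := fun {a b} ha hb => P.2.1.2.1 a b (mul_comm a b) ha hb
      smul_mem' := fun c x hx => by
        simpa [smul_eq_mul] using P.2.1.2.2 c x (mul_comm c x) hx }
  isPrime :=
    { ne_top' := fun htop => IsPrimePartialIdeal.one_not_mem P.2 (Ideal.eq_top_iff_one _ |>.mp htop)
      mem_or_mem' := fun {x y} hxy => P.2.2.2 x y (mul_comm x y) hxy }

/-- On commutative rings, prime partial ideals are exactly prime ideals: the canonical
comparison natural transformation from the restriction of `pSpec` to `Spec`. -/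
def pSpecToSpec : (forget₂ CommRingCat RingCat).op ⋙ pSpec ⟶ SpecFunctor where
  app C := TypeCat.ofHom fun P => toPrimeSpectrum P

/-!
A prime partial ideal is determined by its members, and membership of `a ∈ R` can be tested on
the commutative ring `ℤ[X]` through the map `X ↦ a`. So a transformation `δ : F ⟶ pSpec`
restricting to `η` is forced: `a ∈ δ_R(x)` iff `X ∈ η_{ℤ[X]}(F(X ↦ a)(x))`. Conversely, by
naturality of `η` the preimage of this set under any ring map `g : C → R` from a commutative
ring is the prime ideal `η_C(F(g)(x))`; since two commuting elements generate a commutative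
subring, the set is a prime partial ideal.
-/

universe u

theorem IsPrimePartialIdeal.of_isPrime_comap {R : Type u} [Ring R] {S : Set R}
    (h : ∀ (C : Type u) [CommRing C] (g : C →+* R),
      ∃ I : Ideal C, I.IsPrime ∧ (I : Set C) = g ⁻¹' S) :
    IsPrimePartialIdeal S := by
  have hpair : ∀ a b : R, a * b = b * a → ∃ (C : Type u) (_ : CommRing C) (g : C →+* R)
      (I : Ideal C) (c d : C), I.IsPrime ∧ (∀ z, z ∈ I ↔ g z ∈ S) ∧ g c = a ∧ g d = b := by
    intro a b hab
    let A := Subring.closure {a, b}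
    have : IsMulCommutative A := Subring.isMulCommutative_closure <| by
      rintro x (rfl | rfl) y (rfl | rfl) <;> simp [hab]
    open scoped IsMulCommutative in
    obtain ⟨I, hI, hIS⟩ := h A A.subtype
    exact ⟨A, inferInstance, A.subtype, I, ⟨a, Subring.subset_closure (by simp)⟩,
      ⟨b, Subring.subset_closure (by simp)⟩, hI, fun z => Set.ext_iff.mp hIS z, rfl, rfl⟩
  refine ⟨⟨?_, ?_, ?_⟩, ?_, ?_⟩
  · obtain ⟨C, _, g, I, -, -, -, hIS, -, -⟩ := hpair 0 0 rfl
    simpa using (hIS 0).mp I.zero_mem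
  · intro a b hab ha hb
    obtain ⟨C, _, g, I, c, d, -, hIS, rfl, rfl⟩ := hpair a b hab
    simpa using (hIS _).mp (I.add_mem ((hIS c).mpr ha) ((hIS d).mpr hb))
  · intro a b hab hb
    obtain ⟨C, _, g, I, c, d, -, hIS, rfl, rfl⟩ := hpair a b hab
    simpa using (hIS _).mp (I.mul_mem_left c ((hIS d).mpr hb))
  · intro hS
    obtain ⟨C, _, g, I, -, -, hI, hIS, -, -⟩ := hpair 0 0 rfl
    exact hI.ne_top ((Ideal.eq_top_iff_one I).mpr ((hIS 1).mpr (by simp [hS])))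
  · intro a b hab hS
    obtain ⟨C, _, g, I, c, d, hI, hIS, rfl, rfl⟩ := hpair a b hab
    simpa only [hIS] using hI.mem_or_mem ((hIS _).mpr (by simpa using hS))

theorem CategoryTheory.Functor.isRightKanExtension_of_existsUnique {C D H : Type*} [Category C]
    [Category D] [Category H] {L : C ⥤ D} {F : C ⥤ H} (F' : D ⥤ H) (α : L ⋙ F' ⟶ F)
    (h : ∀ (G : D ⥤ H) (β : L ⋙ G ⟶ F), ∃! δ : G ⟶ F', Functor.whiskerLeft L δ ≫ α = β) :
    F'.IsRightKanExtension α := by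
  refine ⟨⟨Limits.IsTerminal.ofUniqueHom
    (fun G => CostructuredArrow.homMk (h G.left G.hom).choose (h G.left G.hom).choose_spec.1)
    fun G m => CostructuredArrow.hom_ext _ _ ?_⟩⟩
  exact (h G.left G.hom).choose_spec.2 m.left (m.w.trans (Category.comp_id _))

namespace pSpec

noncomputable section

open Opposite Polynomial

def evalX {R : RingCat} (a : R) : (forget₂ CommRingCat RingCat).obj (.of ℤ[X]) ⟶ R :=
  RingCat.ofHom (aeval a).toRingHom

def commEvalX {C : CommRingCat} (c : C) : CommRingCat.of ℤ[X] ⟶ C :=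
  CommRingCat.ofHom (aeval c).toRingHom

theorem evalX_comp {R S : RingCat} (a : R) (f : R ⟶ S) : evalX a ≫ f = evalX (f a) := by
  ext p
  exact (aeval_algHom_apply f.hom.toIntAlgHom a p).symm

theorem forget₂_map_commEvalX {C : CommRingCat} (c : C) :
    (forget₂ CommRingCat RingCat).map (commEvalX c) = evalX c :=
  rfl

variable (F : RingCatᵒᵖ ⥤ Type) (η : (forget₂ CommRingCat RingCat).op ⋙ F ⟶ SpecFunctor)

def liftSet {R : RingCat} (x : F.obj (op R)) : Set R :=
  {a | X ∈ (η.app (op (.of ℤ[X])) (F.map (evalX a).op x)).asIdeal}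

theorem preimage_liftSet {R : RingCat} {C : CommRingCat}
    (g : (forget₂ CommRingCat RingCat).obj C ⟶ R) (x : F.obj (op R)) :
    g.hom ⁻¹' liftSet F η x = (η.app (op C) (F.map g.op x)).asIdeal := by
  ext c
  have hnat := NatTrans.naturality_apply η (commEvalX c).op (F.map g.op x)
  dsimp only [Functor.comp_obj, Functor.op_obj, Functor.comp_map, Functor.op_map,
    Quiver.Hom.unop_op] at hnat
  rw [Set.mem_preimage, liftSet, Set.mem_ofPred, ← evalX_comp, ← forget₂_map_commEvalX, op_comp,
    Functor.map_comp_apply, hnat]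
  change X ∈ Ideal.comap (commEvalX c).hom _ ↔ _
  simp [commEvalX]

theorem liftSet_map {R S : RingCat} (f : S ⟶ R) (x : F.obj (op R)) :
    liftSet F η (F.map f.op x) = f.hom ⁻¹' liftSet F η x := by
  ext a
  simp only [liftSet, Set.mem_preimage, Set.mem_ofPred, ← evalX_comp, op_comp,
    Functor.map_comp_apply]

theorem isPrimePartialIdeal_liftSet {R : RingCat} (x : F.obj (op R)) :
    IsPrimePartialIdeal (liftSet F η x) :=
  .of_isPrime_comap fun C _ g => ⟨_, PrimeSpectrum.isPrime _,
    (preimage_liftSet F η (C := .of C) (RingCat.ofHom g) x).symm⟩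

def lift : F ⟶ pSpec where
  app R := TypeCat.ofHom fun x => ⟨liftSet F η x, isPrimePartialIdeal_liftSet F η x⟩
  naturality R S f := by
    ext x
    exact Subtype.ext (liftSet_map F η f.unop x)

theorem lift_fac :
    Functor.whiskerLeft (forget₂ CommRingCat RingCat).op (lift F η) ≫ pSpecToSpec = η := by
  ext C : 2
  refine ConcreteCategory.hom_ext _ _ fun x => ?_
  have h := preimage_liftSet F η (𝟙 _) x
  simp only [RingCat.hom_id, RingHom.coe_id, Set.preimage_id, op_id, F.map_id] at h
  exact PrimeSpectrum.ext (SetLike.coe_injective h)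

theorem eq_lift {δ : F ⟶ pSpec}
    (hδ : Functor.whiskerLeft (forget₂ CommRingCat RingCat).op δ ≫ pSpecToSpec = η) :
    δ = lift F η := by
  ext R : 2
  refine ConcreteCategory.hom_ext _ _ fun x => Subtype.ext (Set.ext fun a => ?_)
  have hnat := NatTrans.naturality_apply δ (evalX a).op x
  have hfac := congr_arg (fun θ => θ.app (op (.of ℤ[X])) (F.map (evalX a).op x)) hδ
  change a ∈ (δ.app R x).1 ↔
    (X : ℤ[X]) ∈ (η.app (op (.of ℤ[X])) (F.map (evalX a).op x)).asIdeal
  rw [← hfac]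
  change a ∈ (δ.app R x).1 ↔ (X : ℤ[X]) ∈ (δ.app _ (F.map (evalX a).op x)).1
  rw [hnat]
  change a ∈ (δ.app R x).1 ↔ aeval a (X : ℤ[X]) ∈ (δ.app R x).1
  rw [aeval_X]

theorem existsUnique_lift :
    ∃! δ : F ⟶ pSpec,
      Functor.whiskerLeft (forget₂ CommRingCat RingCat).op δ ≫ pSpecToSpec = η :=
  ⟨lift F η, lift_fac F η, fun _ => eq_lift F η⟩

end

end pSpec

/-- `pSpec`, with the canonical identification of its restriction to commutative rings
with `Spec`, is the right Kan extension of `Spec` along the inclusion of the opposite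
category of commutative rings into the opposite category of rings.  Concretely: for every
contravariant functor `F` from rings to sets and every natural transformation `η` from
the restriction of `F` to `Spec`, there is a unique natural transformation
`δ : F ⟶ pSpec` whose restriction to commutative rings is `η`. -/
theorem pSpec_isRightKanExtension :
    pSpec.IsRightKanExtension pSpecToSpec ∧
    ∀ (F : RingCatᵒᵖ ⥤ Type)
      (η : (forget₂ CommRingCat RingCat).op ⋙ F ⟶ SpecFunctor),
      ∃! δ : F ⟶ pSpec,
        Functor.whiskerLeft (forget₂ CommRingCat RingCat).op δ ≫ pSpecToSpec = η :=
  ⟨Functor.isRightKanExtension_of_existsUnique _ _ pSpec.existsUnique_lift,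
    pSpec.existsUnique_lift⟩
end

section
/- Let k be an algebraically closed field and let R be a (possibly noncommutative, unital, associative) k-algebra in which every element is algebraic over k (for example, R finite dimensional over k). Then the map f ↦ f⁻¹(0) is a bijection from the set of morphisms of partial k-algebras f : R → k onto the set of prime partial ideals of R. -/
open Polynomial

theorem Commute.sub_algebraMap {k R : Type*} [CommRing k] [Ring R] [Algebra k R] {r s : R}
    (h : Commute r s) (l m : k) :
    Commute (r - algebraMap k R l) (s - algebraMap k R m) :=
  (h.sub_right (Algebra.commute_algebraMap_right m r)).sub_left
    ((Algebra.commute_algebraMap_left l s).sub_right (Algebra.commute_algebraMap_left l _))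

namespace IsPartialIdeal

variable {R : Type*} [Ring R] {I : Set R}

theorem zero_mem (hI : IsPartialIdeal I) : (0 : R) ∈ I := hI.1

theorem add_mem (hI : IsPartialIdeal I) {a b : R} (h : Commute a b) (ha : a ∈ I)
    (hb : b ∈ I) : a + b ∈ I :=
  hI.2.1 a b h ha hb

theorem mul_mem_left (hI : IsPartialIdeal I) {a b : R} (h : Commute a b) (hb : b ∈ I) :
    a * b ∈ I :=
  hI.2.2 a b h hb

theorem mul_mem_right (hI : IsPartialIdeal I) {a b : R} (h : Commute a b) (ha : a ∈ I) :
    a * b ∈ I :=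
  h.eq ▸ hI.mul_mem_left h.symm ha

theorem smul_mem {k : Type*} [CommSemiring k] [Algebra k R] (hI : IsPartialIdeal I) (c : k)
    {a : R} (ha : a ∈ I) : c • a ∈ I := by
  rw [Algebra.smul_def]
  exact hI.mul_mem_left (Algebra.commutes c a) ha

theorem eq_univ_of_one_mem (hI : IsPartialIdeal I) (h1 : (1 : R) ∈ I) : I = Set.univ :=
  Set.eq_univ_of_forall fun x => mul_one x ▸ hI.mul_mem_left (Commute.one_right x) h1

def comap (hI : IsPartialIdeal I) {S : Type*} [CommRing S] (φ : S →+* R) : Ideal S where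
  carrier := φ ⁻¹' I
  zero_mem' := by simpa using hI.zero_mem
  add_mem' {a b} ha hb := by
    simpa using hI.add_mem ((Commute.all a b).map φ) ha hb
  smul_mem' c a ha := by
    simpa using hI.mul_mem_left ((Commute.all c a).map φ) ha

theorem mem_comap (hI : IsPartialIdeal I) {S : Type*} [CommRing S] {φ : S →+* R} {s : S} :
    s ∈ hI.comap φ ↔ φ s ∈ I :=
  Iff.rfl

end IsPartialIdeal

namespace IsPrimePartialIdeal

variable {R : Type*} [Ring R] {P : Set R}

theorem one_notMem (hP : IsPrimePartialIdeal P) : (1 : R) ∉ P :=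
  fun h => hP.2.1 (hP.1.eq_univ_of_one_mem h)

theorem comap_isPrime (hP : IsPrimePartialIdeal P) {S : Type*} [CommRing S] (φ : S →+* R) :
    (hP.1.comap φ).IsPrime where
  ne_top' h := hP.one_notMem <| map_one φ ▸ (h ▸ Submodule.mem_top : (1 : S) ∈ hP.1.comap φ)
  mem_or_mem' {a b} h := hP.2.2 (φ a) (φ b) ((Commute.all a b).map φ) (map_mul φ a b ▸ h)

variable {k : Type*} [Field k] [Algebra k R]

theorem sub_algebraMap_mem_iff (hP : IsPrimePartialIdeal P) (r : R) (l : k) :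
    r - algebraMap k R l ∈ P ↔ X - C l ∈ hP.1.comap (aeval (R := k) r).toRingHom := by
  simp [IsPartialIdeal.mem_comap]

theorem eq_of_sub_algebraMap_mem (hP : IsPrimePartialIdeal P) {r : R} {l m : k}
    (hl : r - algebraMap k R l ∈ P) (hm : r - algebraMap k R m ∈ P) : l = m := by
  set Q := hP.1.comap (aeval (R := k) r).toRingHom
  rw [hP.sub_algebraMap_mem_iff] at hl hm
  by_contra hne
  have hC : C (m - l) ∈ Q := by
    simpa [C_sub] using Q.sub_mem hl hm
  have hunit : IsUnit (C (m - l)) := isUnit_C.2 (sub_ne_zero.2 (Ne.symm hne)).isUnit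
  exact (hP.comap_isPrime _).ne_top (Q.eq_top_of_isUnit_mem hC hunit)

/-- Over an algebraically closed field, a prime ideal of `k[X]` containing the nonzero
polynomial `p` contains one of the linear factors of `p`. -/
theorem exists_sub_algebraMap_mem [IsAlgClosed k] (hP : IsPrimePartialIdeal P) {r : R}
    (hr : IsAlgebraic k r) : ∃ l : k, r - algebraMap k R l ∈ P := by
  obtain ⟨p, hp0, hpr⟩ := hr
  set Q := hP.1.comap (aeval (R := k) r).toRingHom
  have hQ : Q.IsPrime := hP.comap_isPrime _
  have hpQ : p ∈ Q := by
    simpa [Q, IsPartialIdeal.mem_comap, hpr] using hP.1.zero_mem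
  rw [(IsAlgClosed.splits p).eq_prod_roots] at hpQ
  have hlc : C p.leadingCoeff ∉ Q := fun h =>
    hQ.ne_top (Q.eq_top_of_isUnit_mem h (isUnit_C.2 (leadingCoeff_ne_zero.2 hp0).isUnit))
  obtain ⟨_, hmem, hfactor⟩ := (hQ.multiset_prod_mem_iff_exists_mem _).1
    ((hQ.mem_or_mem hpQ).resolve_left hlc)
  obtain ⟨l, -, rfl⟩ := Multiset.mem_map.1 hmem
  exact ⟨l, (hP.sub_algebraMap_mem_iff r l).2 hfactor⟩

theorem isPartialAlgHom_of_forall_sub_algebraMap_mem (hP : IsPrimePartialIdeal P)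
    {f : R → k} (hf : ∀ r, r - algebraMap k R (f r) ∈ P) : IsPartialAlgHom k f := by
  have hf_unique : ∀ {r : R} {l : k}, r - algebraMap k R l ∈ P → f r = l :=
    fun hl => hP.eq_of_sub_algebraMap_mem (hf _) hl
  refine ⟨hf_unique (by simpa using hP.1.zero_mem), hf_unique (by simpa using hP.1.zero_mem),
    fun c a => hf_unique ?_, fun a b hab => hf_unique ?_, fun a b hab => hf_unique ?_⟩
  · have h : c • a - algebraMap k R (c * f a) = c • (a - algebraMap k R (f a)) := by
      rw [smul_sub, Algebra.smul_def, Algebra.smul_def, map_mul]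
    rw [h]
    exact hP.1.smul_mem c (hf a)
  · have h : a + b - algebraMap k R (f a + f b) =
        (a - algebraMap k R (f a)) + (b - algebraMap k R (f b)) := by
      rw [map_add]; abel
    rw [h]
    exact hP.1.add_mem (Commute.sub_algebraMap hab _ _) (hf a) (hf b)
  · have h : a * b - algebraMap k R (f a * f b) =
        (a - algebraMap k R (f a)) * b + f a • (b - algebraMap k R (f b)) := by
      rw [map_mul, Algebra.smul_def]; noncomm_ring
    have hcomm : Commute (a - algebraMap k R (f a)) b := by
      simpa using Commute.sub_algebraMap hab (f a) 0
    have hb : Commute b (b - algebraMap k R (f b)) := by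
      simpa using Commute.sub_algebraMap (Commute.refl b) 0 (f b)
    rw [h]
    refine hP.1.add_mem ?_ (hP.1.mul_mem_right hcomm (hf a)) (hP.1.smul_mem _ (hf b))
    exact ((Commute.sub_algebraMap hab _ _).mul_left hb).smul_right _

theorem preimage_zero_eq_of_forall_sub_algebraMap_mem (hP : IsPrimePartialIdeal P)
    {f : R → k} (hf : ∀ r, r - algebraMap k R (f r) ∈ P) : f ⁻¹' {0} = P := by
  ext r
  refine ⟨fun hr => by simpa [show f r = 0 from hr] using hf r, fun hr => ?_⟩
  exact hP.eq_of_sub_algebraMap_mem (hf r) (by simpa using hr)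

end IsPrimePartialIdeal

namespace IsPartialAlgHom

variable {k R : Type*} [CommRing k] [Ring R] [Algebra k R] {f : R → k}

theorem map_sub_algebraMap (hf : IsPartialAlgHom k f) (r : R) (c : k) :
    f (r - algebraMap k R c) = f r - c := by
  have h : r - algebraMap k R c = r + (-c) • 1 := by
    rw [neg_smul, ← Algebra.algebraMap_eq_smul_one, sub_eq_add_neg]
  rw [h, hf.2.2.2.1 _ _ ((Commute.one_right r).smul_right _), hf.2.2.1, hf.2.1, mul_one,
    sub_eq_add_neg]

theorem isPrimePartialIdeal_preimage_zero [IsDomain k] (hf : IsPartialAlgHom k f) :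
    IsPrimePartialIdeal (f ⁻¹' {0}) := by
  obtain ⟨h0, h1, -, hadd, hmul⟩ := hf
  refine ⟨⟨h0, fun a b hab ha hb => ?_, fun a b hab hb => ?_⟩, fun h => ?_,
    fun x y hxy h => ?_⟩
  · simp_all
  · simp_all
  · have h1' : (1 : R) ∈ f ⁻¹' {0} := h ▸ Set.mem_univ 1
    simp_all
  · simpa [hmul x y hxy] using h

end IsPartialAlgHom

/-- Over an algebraically closed field `k`, for an algebraic `k`-algebra `R`, the map
`f ↦ f⁻¹(0)` is a bijection from the set of morphisms of partial `k`-algebras `R → k`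
onto the set of prime partial ideals of `R`. -/
theorem partialAlgHom_equiv_primePartialIdeals {k : Type*} [Field k] [IsAlgClosed k]
    {R : Type*} [Ring R] [Algebra k R] (halg : ∀ r : R, IsAlgebraic k r) :
    Set.BijOn (fun f : R → k => f ⁻¹' {0})
      {f : R → k | IsPartialAlgHom k f} {P : Set R | IsPrimePartialIdeal P} := by
  refine ⟨fun f hf => hf.isPrimePartialIdeal_preimage_zero, fun f hf g hg hfg => ?_,
    fun P hP => ?_⟩
  · have hker : ∀ r, r - algebraMap k R (f r) ∈ g ⁻¹' {0} := fun r => by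
      rw [← show f ⁻¹' {0} = g ⁻¹' {0} from hfg]
      simp [hf.map_sub_algebraMap]
    funext r
    exact hg.isPrimePartialIdeal_preimage_zero.eq_of_sub_algebraMap_mem (hker r)
      (by simp [hg.map_sub_algebraMap])
  · choose f hf using fun r => IsPrimePartialIdeal.exists_sub_algebraMap_mem hP (halg r)
    exact ⟨f, hP.isPartialAlgHom_of_forall_sub_algebraMap_mem hf,
      hP.preimage_zero_eq_of_forall_sub_algebraMap_mem hf⟩
end

section
/- Let k be a field, let n be a positive natural number, and let f : Mₙ(k) → k be a morphism of partial k-algebras, where Mₙ(k) is the k-algebra of n × n matrices over k. Then for every matrix r ∈ Mₙ(k), the scalar f(r) is an eigenvalue of r; that is, det(r − f(r) • 1) = 0. -/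
/-- If `k` is a field, `n > 0`, and `f : Mₙ(k) → k` is a morphism of partial `k`-algebras,
then `f(r)` is an eigenvalue of `r` for every matrix `r`. -/
theorem partialAlgHom_matrix_eigenvalue {k : Type*} [Field k] {n : ℕ} (hn : 0 < n)
    (f : Matrix (Fin n) (Fin n) k → k) (hf : IsPartialAlgHom k f)
    (r : Matrix (Fin n) (Fin n) k) :
    (r - f r • (1 : Matrix (Fin n) (Fin n) k)).det = 0 := by
  obtain ⟨h0, h1, hsmul, hadd, hmul⟩ := hf
  set c := f r with hc
  set s := r - c • 1 with hsdef
  have hfs : f s = 0 := by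
    have hcomm : s * (c • 1) = (c • 1) * s := by
      simp [Matrix.smul_mul, Matrix.mul_smul, Matrix.mul_one, Matrix.one_mul]
    have h : f (s + c • 1) = f s + f (c • 1) := hadd _ _ hcomm
    have heq : s + c • 1 = r := by rw [hsdef]; abel
    rw [heq, hsmul, h1, mul_one] at h
    linear_combination -h
  by_contra hdet
  have hu : IsUnit s.det := isUnit_iff_ne_zero.mpr hdet
  have h2 : f (s * s⁻¹) = f s * f s⁻¹ := by
    apply hmul
    rw [Matrix.mul_nonsing_inv _ hu, Matrix.nonsing_inv_mul _ hu]
  rw [Matrix.mul_nonsing_inv _ hu, h1, hfs, zero_mul] at h2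
  exact one_ne_zero h2
end

section
/- For every natural number n ≥ 3, there is no morphism of partial ℂ-algebras from Mₙ(ℂ) to ℂ; that is, there is no function f : Mₙ(ℂ) → ℂ with f(0) = 0 and f(1) = 1 such that for all matrices A, B with A*B = B*A and all λ ∈ ℂ: f(λ • A) = λ * f(A), f(A + B) = f(A) + f(B), and f(A*B) = f(A) * f(B). -/
/-!
A partial morphism sends an idempotent to `0` or `1`, and pairwise orthogonal idempotents summing
to `1` to values summing to `1`. In `M₃` the rank-one projections onto 33 suitable integer vectors
would therefore be coloured `0`/`1` so that each of 20 orthogonal bases gets exactly one `1` and no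
two orthogonal vectors both get `1`; a short case analysis (Kochen–Specker) shows that no such
colouring exists. For `n ≥ 3`, `f` then kills the image of `1` under every corner embedding
`M₃ → Mₙ` (otherwise `f` restricted to that corner would be a partial morphism on `M₃`), hence
every diagonal matrix unit, and `f 1 = ∑ i, f (Eᵢᵢ) = 0`.
-/

open Matrix

namespace IsPartialAlgHom

variable {k R : Type*} [CommRing k] [Ring R] [Algebra k R] {f : R → k}

theorem map_zero (hf : IsPartialAlgHom k f) : f 0 = 0 := hf.1

theorem map_one (hf : IsPartialAlgHom k f) : f 1 = 1 := hf.2.1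

theorem map_smul (hf : IsPartialAlgHom k f) (c : k) (a : R) : f (c • a) = c * f a :=
  hf.2.2.1 c a

theorem map_add_of_commute (hf : IsPartialAlgHom k f) {a b : R} (h : Commute a b) :
    f (a + b) = f a + f b :=
  hf.2.2.2.1 a b h

theorem map_mul_of_commute (hf : IsPartialAlgHom k f) {a b : R} (h : Commute a b) :
    f (a * b) = f a * f b :=
  hf.2.2.2.2 a b h

theorem map_sum_of_pairwise_commute (hf : IsPartialAlgHom k f) {ι : Type*} (s : Finset ι)
    (a : ι → R) (h : (s : Set ι).Pairwise fun i j => Commute (a i) (a j)) :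
    f (∑ i ∈ s, a i) = ∑ i ∈ s, f (a i) := by
  classical
  induction s using Finset.induction_on with
  | empty => simpa using hf.map_zero
  | insert i s hi ih =>
    rw [Finset.coe_insert, Set.pairwise_insert] at h
    have hcomm : Commute (a i) (∑ j ∈ s, a j) :=
      Commute.sum_right _ _ _ fun j hj => (h.2 j hj (ne_of_mem_of_not_mem hj hi).symm).1
    rw [Finset.sum_insert hi, Finset.sum_insert hi, hf.map_add_of_commute hcomm, ih h.1]

theorem mul_eq_zero_of_mul_eq_zero (hf : IsPartialAlgHom k f) {a b : R} (hab : a * b = 0)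
    (hba : b * a = 0) : f a * f b = 0 := by
  rw [← hf.map_mul_of_commute (hab.trans hba.symm), hab, hf.map_zero]

theorem eq_zero_or_eq_one_of_isIdempotentElem [NoZeroDivisors k] (hf : IsPartialAlgHom k f) {e : R}
    (he : IsIdempotentElem e) : f e = 0 ∨ f e = 1 := by
  rw [← IsIdempotentElem.iff_eq_zero_or_one, IsIdempotentElem,
    ← hf.map_mul_of_commute (Commute.refl e), he.eq]

theorem exists_natCast_eq_of_isIdempotentElem [NoZeroDivisors k] (hf : IsPartialAlgHom k f) {e : R}
    (he : IsIdempotentElem e) : ∃ n : ℕ, n ≤ 1 ∧ (n : k) = f e := by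
  rcases hf.eq_zero_or_eq_one_of_isIdempotentElem he with h | h
  · exact ⟨0, zero_le_one, by simp [h]⟩
  · exact ⟨1, le_rfl, by simp [h]⟩

theorem comp_nonUnitalAlgHom {S : Type*} [Ring S] [Algebra k S] (hf : IsPartialAlgHom k f)
    (φ : S →ₙₐ[k] R) (h1 : f (φ 1) = 1) : IsPartialAlgHom k (f ∘ φ) := by
  have hφ : ∀ {a b : S}, Commute a b → Commute (φ a) (φ b) := fun h => h.map φ
  refine ⟨?_, h1, fun c a => ?_, fun a b h => ?_, fun a b h => ?_⟩
  · simp [hf.map_zero]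
  · simp [hf.map_smul]
  · simp [hf.map_add_of_commute (hφ h)]
  · simp [hf.map_mul_of_commute (hφ h)]

end IsPartialAlgHom

namespace Matrix

section LineProj

variable {K ι : Type*} [Field K] [Fintype ι]

-- The projection onto `K ∙ u` along the orthogonal complement for the bilinear form `⬝ᵥ`
-- (not the Hermitian one); it is `0` when `u ⬝ᵥ u = 0`.
noncomputable def lineProj (u : ι → K) : Matrix ι ι K :=
  (u ⬝ᵥ u)⁻¹ • vecMulVec u u

theorem lineProj_mul_lineProj (u v : ι → K) :
    lineProj u * lineProj v =
      ((u ⬝ᵥ u)⁻¹ * (v ⬝ᵥ v)⁻¹ * (u ⬝ᵥ v)) • vecMulVec u v := by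
  simp only [lineProj, Matrix.smul_mul, Matrix.mul_smul, vecMulVec_mul_vecMulVec, vecMulVec_smul,
    smul_smul]
  ring_nf

theorem lineProj_mul_lineProj_of_dotProduct_eq_zero {u v : ι → K} (h : u ⬝ᵥ v = 0) :
    lineProj u * lineProj v = 0 := by
  simp [lineProj_mul_lineProj, h]

theorem isIdempotentElem_lineProj (u : ι → K) : IsIdempotentElem (lineProj u) := by
  rw [IsIdempotentElem, lineProj_mul_lineProj, lineProj]
  rcases eq_or_ne (u ⬝ᵥ u) 0 with h | h
  · simp [h]
  · rw [mul_assoc, inv_mul_cancel₀ h, mul_one]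

theorem sum_lineProj_eq_one [DecidableEq ι] (b : ι → ι → K)
    (horth : Pairwise fun i j => b i ⬝ᵥ b j = 0) (hb : ∀ i, b i ⬝ᵥ b i ≠ 0) :
    ∑ i, lineProj (b i) = 1 := by
  -- `B * Bᵀ = D` is invertible for `B = of b`, so `Bᵀ * D⁻¹` is a right, hence left, inverse of `B`.
  set d : ι → K := fun i => b i ⬝ᵥ b i
  have hgram : of b * (of b)ᵀ = diagonal d := by
    ext i j
    change b i ⬝ᵥ b j = _
    rcases eq_or_ne i j with rfl | hij
    · simp [d]
    · simp [horth hij, hij]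
  have hinv : ((of b)ᵀ * diagonal d⁻¹) * of b = 1 := by
    rw [mul_eq_one_comm, ← mul_assoc, hgram, diagonal_mul_diagonal]
    simp [d, mul_inv_cancel₀ (hb _)]
  rw [← hinv]
  ext p q
  rw [mul_apply]
  simp only [lineProj, Matrix.sum_apply, smul_apply, vecMulVec_apply, mul_diagonal,
    transpose_apply, of_apply, Pi.inv_apply, smul_eq_mul, d]
  exact Finset.sum_congr rfl fun c _ => by ring

theorem intCast_dotProduct_intCast (u v : ι → ℤ) :
    ((fun a => (u a : K)) ⬝ᵥ fun a => (v a : K)) = ((u ⬝ᵥ v : ℤ) : K) :=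
  ((Int.castRingHom K).map_dotProduct u v).symm

end LineProj

section Corner

variable {K m n : Type*} [CommRing K] [Fintype m] [DecidableEq m] [Fintype n] [DecidableEq n]

-- `A ↦ Sᵀ * A * S` for the partial permutation matrix `S` of `g`, which satisfies `S * Sᵀ = 1`.
def cornerEmbedding (g : m ↪ n) : Matrix m m K →ₙₐ[K] Matrix n n K where
  toFun A := (1 : Matrix n n K).submatrix id g * A * (1 : Matrix n n K).submatrix g id
  map_smul' c A := by simp
  map_zero' := by simp
  map_add' A B := by simp [Matrix.mul_add, Matrix.add_mul]
  map_mul' A B := by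
    have h : (1 : Matrix n n K).submatrix g id * (1 : Matrix n n K).submatrix id g = 1 := by
      rw [← submatrix_mul _ _ _ _ _ Function.bijective_id, Matrix.one_mul,
        submatrix_one _ g.injective]
    simp only [Matrix.mul_assoc]
    rw [← Matrix.mul_assoc _ (submatrix 1 id g), h, Matrix.one_mul]

theorem cornerEmbedding_single (g : m ↪ n) (a b : m) (c : K) :
    cornerEmbedding g (single a b c) = single (g a) (g b) c := by
  ext p q
  simp only [cornerEmbedding, NonUnitalAlgHom.coe_mk, mul_apply, submatrix_apply, id, one_apply,
    single_apply]
  simp only [ite_and, mul_ite, ite_mul, one_mul, zero_mul, mul_zero, Finset.sum_ite_eq,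
    Finset.mem_univ, ↓reduceIte, eq_comm, mul_one]
  rw [Finset.sum_eq_single b (fun x _ hx => by simp [Ne.symm hx]) (by simp)]
  split_ifs <;> simp_all

end Corner

end Matrix

def kochenSpeckerVector : Fin 33 → Fin 3 → ℤ :=
  ![![0, 0, 1], ![0, 1, -1], ![0, 1, 0], ![0, 1, 1], ![1, -2, -1], ![1, -2, 0], ![1, -2, 1],
    ![1, -1, -2], ![1, -1, -1], ![1, -1, 0], ![1, -1, 1], ![1, -1, 2], ![1, 0, -2], ![1, 0, -1],
    ![1, 0, 0], ![1, 0, 1], ![1, 0, 2], ![1, 1, -2], ![1, 1, -1], ![1, 1, 0], ![1, 1, 1],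
    ![1, 1, 2], ![1, 2, -1], ![1, 2, 0], ![1, 2, 1], ![2, -1, -1], ![2, -1, 0], ![2, -1, 1],
    ![2, 0, -1], ![2, 0, 1], ![2, 1, -1], ![2, 1, 0], ![2, 1, 1]]

def kochenSpeckerBases : List (Fin 3 → Fin 33) :=
  [![0, 2, 14], ![0, 5, 31], ![0, 9, 19], ![0, 23, 26], ![1, 3, 14], ![1, 8, 32], ![1, 20, 25],
   ![2, 12, 29], ![2, 13, 15], ![2, 16, 28], ![3, 10, 30], ![3, 18, 27], ![4, 15, 18],
   ![6, 13, 20], ![7, 10, 19], ![8, 11, 19], ![8, 15, 22], ![9, 17, 20], ![9, 18, 21],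
   ![10, 13, 24]]

def kochenSpeckerOrthogonalPairs : List (Fin 33 × Fin 33) :=
  [(4, 31), (5, 30), (5, 32), (6, 31), (7, 29), (11, 28), (12, 27), (12, 32), (16, 25),
   (16, 30), (17, 29), (21, 28), (22, 26), (23, 25), (23, 27), (24, 26)]

theorem kochenSpeckerVector_dotProduct_self_ne_zero (i : Fin 33) :
    kochenSpeckerVector i ⬝ᵥ kochenSpeckerVector i ≠ 0 := by
  revert i
  simp [kochenSpeckerVector, dotProduct, Fin.sum_univ_three, Fin.forall_fin_succ]

theorem pairwise_dotProduct_kochenSpeckerBases {t : Fin 3 → Fin 33}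
    (ht : t ∈ kochenSpeckerBases) :
    Pairwise fun i j => kochenSpeckerVector (t i) ⬝ᵥ kochenSpeckerVector (t j) = 0 := by
  revert t
  simp [kochenSpeckerBases, kochenSpeckerVector, Pairwise, dotProduct, Fin.sum_univ_three,
    Fin.forall_fin_succ]

theorem dotProduct_kochenSpeckerOrthogonalPairs {p : Fin 33 × Fin 33}
    (hp : p ∈ kochenSpeckerOrthogonalPairs) :
    kochenSpeckerVector p.1 ⬝ᵥ kochenSpeckerVector p.2 = 0 := by
  revert p
  simp [kochenSpeckerOrthogonalPairs, kochenSpeckerVector, dotProduct, Fin.sum_univ_three]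

theorem kochenSpecker_not_colorable (c : Fin 33 → ℕ)
    (hbases : ∀ t ∈ kochenSpeckerBases, ∑ i, c (t i) = 1)
    (hpairs : ∀ p ∈ kochenSpeckerOrthogonalPairs, c p.1 + c p.2 ≤ 1) : False := by
  simp only [kochenSpeckerBases, kochenSpeckerOrthogonalPairs, List.mem_cons, List.not_mem_nil,
    or_false, forall_eq_or_imp, forall_eq, Fin.sum_univ_succ, Fin.succ_zero_eq_one,
    Fin.succ_one_eq_two, Finset.univ_unique, Fin.default_eq_zero, Finset.sum_singleton,
    Matrix.cons_val_zero, Matrix.cons_val_one, Matrix.cons_val] at hbases hpairs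
  grind

section KochenSpecker

variable (K : Type*) [Field K]

noncomputable def kochenSpeckerProj (i : Fin 33) : Matrix (Fin 3) (Fin 3) K :=
  lineProj fun a => (kochenSpeckerVector i a : K)

variable {K}

theorem kochenSpeckerProj_mul_of_dotProduct_eq_zero {i j : Fin 33}
    (h : kochenSpeckerVector i ⬝ᵥ kochenSpeckerVector j = 0) :
    kochenSpeckerProj K i * kochenSpeckerProj K j = 0 :=
  lineProj_mul_lineProj_of_dotProduct_eq_zero (by simp [intCast_dotProduct_intCast, h])

theorem commute_kochenSpeckerProj {i j : Fin 33}
    (h : kochenSpeckerVector i ⬝ᵥ kochenSpeckerVector j = 0) :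
    Commute (kochenSpeckerProj K i) (kochenSpeckerProj K j) := by
  rw [Commute, SemiconjBy, kochenSpeckerProj_mul_of_dotProduct_eq_zero h,
    kochenSpeckerProj_mul_of_dotProduct_eq_zero (by rwa [dotProduct_comm])]

theorem sum_kochenSpeckerProj_eq_one [CharZero K] {t : Fin 3 → Fin 33}
    (ht : t ∈ kochenSpeckerBases) : ∑ a, kochenSpeckerProj K (t a) = 1 :=
  sum_lineProj_eq_one _
    (fun a b hab => by
      simp [intCast_dotProduct_intCast, pairwise_dotProduct_kochenSpeckerBases ht hab])
    (fun a => by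
      simpa [intCast_dotProduct_intCast] using kochenSpeckerVector_dotProduct_self_ne_zero (t a))

theorem not_isPartialAlgHom_matrix_fin_three [CharZero K] (f : Matrix (Fin 3) (Fin 3) K → K) :
    ¬ IsPartialAlgHom K f := by
  intro hf
  choose c hc1 hc using fun i =>
    hf.exists_natCast_eq_of_isIdempotentElem (e := kochenSpeckerProj K i)
      (isIdempotentElem_lineProj _)
  refine kochenSpecker_not_colorable c (fun t ht => ?_) (fun p hp => ?_)
  · have hsum := hf.map_sum_of_pairwise_commute Finset.univ (fun a => kochenSpeckerProj K (t a))
      fun a _ b _ hab => commute_kochenSpeckerProj (pairwise_dotProduct_kochenSpeckerBases ht hab)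
    rw [sum_kochenSpeckerProj_eq_one ht, hf.map_one] at hsum
    simp only [← hc] at hsum
    exact_mod_cast hsum.symm
  · have horth := dotProduct_kochenSpeckerOrthogonalPairs hp
    have hmul := hf.mul_eq_zero_of_mul_eq_zero (kochenSpeckerProj_mul_of_dotProduct_eq_zero horth)
      (kochenSpeckerProj_mul_of_dotProduct_eq_zero (by rwa [dotProduct_comm]))
    rw [← hc, ← hc] at hmul
    have := hc1 p.1
    have := hc1 p.2
    rcases Nat.mul_eq_zero.1 (by exact_mod_cast hmul) with h | h <;> omega

end KochenSpecker

theorem IsPartialAlgHom.map_single_eq_zero {K n : Type*} [Field K] [CharZero K] [Fintype n]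
    [DecidableEq n] {f : Matrix n n K → K} (hf : IsPartialAlgHom K f) (g : Fin 3 ↪ n)
    (a : Fin 3) : f (single (g a) (g a) 1) = 0 := by
  set φ : Matrix (Fin 3) (Fin 3) K →ₙₐ[K] Matrix n n K := cornerEmbedding g
  have hφ1 : f (φ 1) = 0 := by
    refine (hf.eq_zero_or_eq_one_of_isIdempotentElem ?_).resolve_right fun h =>
      not_isPartialAlgHom_matrix_fin_three _ (hf.comp_nonUnitalAlgHom φ h)
    rw [IsIdempotentElem, ← map_mul, mul_one]
  calc f (single (g a) (g a) 1) = f (φ (single a a 1) * φ 1) := by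
        rw [← map_mul, mul_one, cornerEmbedding_single]
    _ = 0 := by rw [hf.map_mul_of_commute ((Commute.one_right _).map φ), hφ1, mul_zero]

/-- For `n ≥ 3` there is no morphism of partial `ℂ`-algebras `Mₙ(ℂ) → ℂ`. -/
theorem no_partialAlgHom_matrix_complex {n : ℕ} (hn : 3 ≤ n) :
    ¬ ∃ f : Matrix (Fin n) (Fin n) ℂ → ℂ, IsPartialAlgHom ℂ f := by
  rintro ⟨f, hf⟩
  have hsingle (i : Fin n) : f (single i i 1) = 0 := by
    obtain ⟨g, rfl⟩ : ∃ g : Fin 3 ↪ Fin n, g 0 = i :=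
      ⟨(Fin.castLEEmb hn).trans (Equiv.swap _ i).toEmbedding, Equiv.swap_apply_left _ _⟩
    exact hf.map_single_eq_zero g 0
  have hsum := hf.map_sum_of_pairwise_commute Finset.univ (fun i => single i i (1 : ℂ))
    fun i _ j _ _ => by simpa only [← diagonal_single] using commute_diagonal _ _
  simp [sum_single_one, hf.map_one, hsingle] at hsum
end

section
/- Let k be an algebraically closed field and let A = M₂(k) be the algebra of 2 × 2 matrices over k. Let 𝓘 ⊆ A be a set of idempotents such that the set of all idempotents of A is the disjoint union {0, 1} ⊔ 𝓘 ⊔ {1 − e : e ∈ 𝓘} (in particular 0, 1 ∉ 𝓘, no element of 𝓘 is of the form 1 − e with e ∈ 𝓘, and every idempotent other than 0 and 1 is either in 𝓘 or of the form 1 − e for a unique e ∈ 𝓘). Then: (a) for every function α : 𝓘 → {0, 1} ⊆ k there exists a morphism of partial k-algebras f_α : A → k whose restriction to 𝓘 equals α; and (b) the assignment α ↦ f_α is a bijection from the set of functions 𝓘 → {0, 1} onto the set of all morphisms of partial k-algebras A → k. -/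
namespace PartialAlgHomAux
set_option linter.unusedSectionVars false
set_option maxHeartbeats 1000000

variable {k : Type*} [Field k]
local notation "M" => Matrix (Fin 2) (Fin 2) k

theorem ch2 (a : M) : a*a - (a 0 0 + a 1 1) • a + (a 0 0 * a 1 1 - a 0 1 * a 1 0) • 1 = 0 := by
  ext i j
  fin_cases i <;> fin_cases j <;>
    simp [Matrix.mul_apply, Fin.sum_univ_two, Matrix.one_apply] <;> ring

theorem exists_pair [IsAlgClosed k] (a : M) : ∃ l m : k, (a - l•1)*(a - m•1) = 0 := by
  set t := a 0 0 + a 1 1 with ht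
  set d := a 0 0 * a 1 1 - a 0 1 * a 1 0 with hd
  obtain ⟨l, hl⟩ : ∃ l : k, l*l - t*l + d = 0 := by
    obtain ⟨l, hl⟩ := IsAlgClosed.exists_root
      (Polynomial.X^2 - Polynomial.C t * Polynomial.X + Polynomial.C d) (by
      have h2 : (Polynomial.X^2 - Polynomial.C t * Polynomial.X + Polynomial.C d).degree = 2 := by
        compute_degree!
      rw [h2]; decide)
    refine ⟨l, ?_⟩
    have := hl
    simp [Polynomial.IsRoot, Polynomial.eval_add, Polynomial.eval_sub] at this
    linear_combination this
  refine ⟨l, t - l, ?_⟩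
  have expand : (a - l•1)*(a - (t-l)•1) = a*a - t•a + (l*(t-l))•1 := by
    simp only [sub_mul, mul_sub, Matrix.smul_mul, Matrix.mul_smul, one_mul, mul_one, smul_smul]
    module
  rw [expand]
  have hlm : l*(t-l) = d := by linear_combination -hl
  rw [hlm]
  exact ch2 a

theorem smul_one_inj {x y : k} (h : x • (1:M) = y • 1) : x = y := by
  have h2 : (x - y) • (1:M) = 0 := by rw [sub_smul, h, sub_self]
  rcases smul_eq_zero.1 h2 with h3|h3
  · exact sub_eq_zero.1 h3
  · exact absurd h3 one_ne_zero

theorem nil_unique {a : M} {l m : k} (h1 : (a - l•1)*(a - l•1) = 0)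
    (h2 : (a - m•1)*(a - m•1) = 0) : l = m := by
  set u := a - l•1 with hu
  set v := a - m•1 with hv
  have huv : u * v = v * u := by
    rw [hu, hv]; noncomm_ring
    module
  have h3 : u - v = (m - l) • (1:M) := by rw [hu, hv]; module
  have t1 : u*v*(u*v) = 0 := by
    calc u*v*(u*v) = u*(v*u)*v := by noncomm_ring
    _ = u*(u*v)*v := by rw [huv]
    _ = (u*u)*(v*v) := by noncomm_ring
    _ = 0 := by rw [h1, zero_mul]
  have t2 : u*v*(v*u) = 0 := by
    calc u*v*(v*u) = u*(v*v)*u := by noncomm_ring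
    _ = 0 := by rw [h2]; simp
  have t3 : v*u*(u*v) = 0 := by
    calc v*u*(u*v) = v*(u*u)*v := by noncomm_ring
    _ = 0 := by rw [h1]; simp
  have t4 : v*u*(v*u) = 0 := by
    calc v*u*(v*u) = v*(u*v)*u := by noncomm_ring
    _ = v*(v*u)*u := by rw [huv]
    _ = (v*v)*(u*u) := by noncomm_ring
    _ = 0 := by rw [h2, zero_mul]
  have h4 : (u-v)*(u-v)*((u-v)*(u-v)) = 0 := by
    have e1 : (u-v)*(u-v) = -(u*v) - v*u := by
      have e0 : (u-v)*(u-v) = u*u - u*v - v*u + v*v := by noncomm_ring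
      rw [e0, h1, h2]; abel
    rw [e1]
    have e2 : (-(u*v) - v*u)*(-(u*v) - v*u)
        = u*v*(u*v) + u*v*(v*u) + (v*u*(u*v) + v*u*(v*u)) := by noncomm_ring
    rw [e2, t1, t2, t3, t4]; simp
  rw [h3] at h4
  have h5 : ((m-l)*(m-l)*((m-l)*(m-l))) • (1:M) = 0 := by
    rw [← h4]
    simp [Matrix.smul_mul, Matrix.mul_smul, smul_smul]
  rcases smul_eq_zero.1 h5 with h6|h6
  · have h7 : m - l = 0 := by
      rcases mul_eq_zero.1 h6 with h|h <;> rcases mul_eq_zero.1 h with h'|h' <;> exact h'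
    exact (sub_eq_zero.1 h7).symm
  · exact absurd h6 one_ne_zero

theorem idem_aux {e : M} (he : e*e = e) :
    e*(1-e) = 0 ∧ (1-e)*e = 0 ∧ (1-e)*(1-e) = 1-e := by
  refine ⟨by rw [mul_one_sub, he, sub_self], by rw [one_sub_mul, he, sub_self], ?_⟩
  have h : (1-e)*(1-e) = 1 - e - e + e*e := by noncomm_ring
  rw [h, he]; abel

theorem comb_mul {e : M} (he : e*e = e) (p q p' q' : k) :
    (p•e + q•(1-e)) * (p'•e + q'•(1-e)) = (p*p')•e + (q*q')•(1-e) := by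
  obtain ⟨i1, i2, i3⟩ := idem_aux he
  simp only [add_mul, mul_add, smul_mul_assoc, mul_smul_comm, smul_smul, he, i1, i2, i3,
    smul_zero, zero_add, add_zero]
  module

theorem comb_inj {e : M} (he : e*e = e) (he0 : e ≠ 0) (he1 : e ≠ 1) {p q p' q' : k}
    (h : p•e + q•(1-e) = p'•e + q'•(1-e)) : p = p' ∧ q = q' := by
  obtain ⟨i1, i2, i3⟩ := idem_aux he
  have h1 := congrArg (fun z => e * z) h
  simp only [mul_add, mul_smul_comm, he, i1, smul_zero, add_zero] at h1
  have h2 := congrArg (fun z => (1-e) * z) h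
  simp only [mul_add, mul_smul_comm, i2, i3, smul_zero, zero_add] at h2
  constructor
  · have : (p - p') • e = 0 := by rw [sub_smul, h1, sub_self]
    rcases smul_eq_zero.1 this with h'|h'
    · exact sub_eq_zero.1 h'
    · exact absurd h' he0
  · have : (q - q') • (1-e) = 0 := by rw [sub_smul, h2, sub_self]
    rcases smul_eq_zero.1 this with h'|h'
    · exact sub_eq_zero.1 h'
    · exact absurd h' (sub_ne_zero.2 (Ne.symm he1))

theorem decomp [IsAlgClosed k] (a : M) : (∃ l : k, (a - l•1)*(a - l•1) = 0) ∨
    (∃ l m : k, ∃ e : M, l ≠ m ∧ e*e = e ∧ a = l•e + m•(1-e)) := by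
  obtain ⟨l, m, hlm⟩ := exists_pair a
  by_cases hne : l = m
  · exact Or.inl ⟨l, by rw [hne]; exact hne ▸ hlm⟩
  · set e : M := (l-m)⁻¹ • (a - m•1) with hedef
    have hlm0 : l - m ≠ 0 := sub_ne_zero.2 hne
    have hsub : (l-m) • e = a - m•1 := by
      rw [hedef, smul_smul, mul_inv_cancel₀ hlm0, one_smul]
    have hcomm : (a - m•1)*(a - l•1) = (a - l•1)*(a - m•1) := by
      noncomm_ring
      module
    have hsq : (a - m•1)*(a - m•1) = (l-m)•(a - m•1) := by
      have hh : a - m•1 = (a - l•1) + (l-m)•1 := by module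
      calc (a - m•1)*(a - m•1) = (a-m•1)*(a - l•1) + (a-m•1)*((l-m)•1) := by
            rw [← mul_add, ← hh]
      _ = (l-m)•(a - m•1) := by rw [hcomm, hlm, zero_add, mul_smul_comm, mul_one]
    have hee : e*e = e := by
      have hsc : (l-m)⁻¹ * (l-m)⁻¹ * (l-m) = (l-m)⁻¹ := by field_simp
      rw [hedef, smul_mul_assoc, mul_smul_comm, hsq, smul_smul, smul_smul, hsc]
    have ha : a = l•e + m•(1-e) := by
      have : l•e + m•(1-e) = (l-m)•e + m•1 := by module
      rw [this, hsub]; module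
    exact Or.inr ⟨l, m, e, hne, hee, ha⟩


theorem scalar_iff (a : M) : (∃ x : k, a = x • 1) ↔ (a 0 1 = 0 ∧ a 1 0 = 0 ∧ a 0 0 = a 1 1) := by
  constructor
  · rintro ⟨x, rfl⟩; simp [Matrix.one_apply]
  · rintro ⟨h1, h2, h3⟩
    exact ⟨a 0 0, by ext i j; fin_cases i <;> fin_cases j <;> simp [Matrix.one_apply, h1, h2, ← h3]⟩

theorem centralizer {a b : M} (hns : ¬ ∃ x : k, a = x • 1) (hab : a * b = b * a) :
    ∃ x y : k, b = x • 1 + y • a := by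
  have e00 := congrFun (congrFun hab 0) 0
  have e01 := congrFun (congrFun hab 0) 1
  have e10 := congrFun (congrFun hab 1) 0
  have e11 := congrFun (congrFun hab 1) 1
  simp [Matrix.mul_apply, Fin.sum_univ_two] at e00 e01 e10 e11
  rw [scalar_iff] at hns
  push_neg at hns
  by_cases hq : a 0 1 ≠ 0
  · refine ⟨b 0 0 - (b 0 1 / a 0 1) * a 0 0, b 0 1 / a 0 1, ?_⟩
    ext i j; fin_cases i <;> fin_cases j <;>
      simp only [Matrix.add_apply, Matrix.smul_apply, Matrix.one_apply, smul_eq_mul] <;>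
      norm_num <;> field_simp
    · linear_combination e00
    · linear_combination e01
  push_neg at hq
  by_cases hr : a 1 0 ≠ 0
  · refine ⟨b 0 0 - (b 1 0 / a 1 0) * a 0 0, b 1 0 / a 1 0, ?_⟩
    ext i j; fin_cases i <;> fin_cases j <;>
      simp only [Matrix.add_apply, Matrix.smul_apply, Matrix.one_apply, smul_eq_mul] <;>
      norm_num <;> field_simp
    · linear_combination -e00
    · linear_combination -e10
  push_neg at hr
  have hps : a 0 0 ≠ a 1 1 := hns hq hr
  have hq' : b 0 1 = 0 := by
    have h : b 0 1 * (a 0 0 - a 1 1) = 0 := by linear_combination e01 - (b 1 1 - b 0 0) * hq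
    rcases mul_eq_zero.1 h with h|h
    · exact h
    · exact absurd (by linear_combination h) hps
  have hr' : b 1 0 = 0 := by
    have h : b 1 0 * (a 1 1 - a 0 0) = 0 := by linear_combination e10 - (b 0 0 - b 1 1) * hr
    rcases mul_eq_zero.1 h with h|h
    · exact h
    · exact absurd (by linear_combination -h) hps
  have hps' : a 0 0 - a 1 1 ≠ 0 := sub_ne_zero.2 hps
  refine ⟨b 0 0 - ((b 0 0 - b 1 1)/(a 0 0 - a 1 1)) * a 0 0, (b 0 0 - b 1 1)/(a 0 0 - a 1 1), ?_⟩
  ext i j; fin_cases i <;> fin_cases j <;>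
    simp only [Matrix.add_apply, Matrix.smul_apply, Matrix.one_apply, smul_eq_mul] <;>
    norm_num [hq, hr, hq', hr'] <;> field_simp <;> ring

def NilM (a : M) : Prop := ∃ l : k, (a - l•1) * (a - l•1) = 0

def EV (c : M → k) (a : M) (l : k) : Prop :=
  (a - l•1) * (a - l•1) = 0 ∨
  (¬ NilM a ∧ ∃ e : M, ∃ m : k, e * e = e ∧ c e = 1 ∧ a = l•e + m•(1-e))

theorem not_nil_comb {l m : k} {e : M} (hne : l ≠ m) (he : e*e = e) (he0 : e ≠ 0)
    (he1 : e ≠ 1) : ¬ NilM (l•e + m•(1-e)) := by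
  rintro ⟨x, hx⟩
  have hd : l•e + m•(1-e) - x•1 = (l-x)•e + (m-x)•(1-e) := by module
  rw [hd, comb_mul he] at hx
  obtain ⟨h1, h2⟩ := comb_inj he he0 he1 (hx.trans (by module : (0:M) = (0:k)•e + (0:k)•(1-e)))
  have hlx := sub_eq_zero.1 (mul_self_eq_zero.1 h1)
  have hmx := sub_eq_zero.1 (mul_self_eq_zero.1 h2)
  exact hne (hlx.trans hmx.symm)

theorem ev_exists [IsAlgClosed k] (c : M → k)
    (hc01 : ∀ e : M, e*e = e → c e = 0 ∨ c e = 1)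
    (hcc : ∀ e : M, e*e = e → e ≠ 0 → e ≠ 1 → c (1-e) = 1 - c e) (a : M) :
    ∃ l, EV c a l := by
  by_cases hn : NilM a
  · obtain ⟨l, hl⟩ := hn; exact ⟨l, Or.inl hl⟩
  rcases decomp a with h|⟨l, m, e, hne, hee, ha⟩
  · exact absurd h hn
  have he0 : e ≠ 0 := by
    rintro rfl
    exact hn ⟨m, by rw [ha]; simp⟩
  have he1 : e ≠ 1 := by
    rintro rfl
    exact hn ⟨l, by rw [ha]; simp⟩
  rcases hc01 e hee with h|h
  · have hc1e : c (1-e) = 1 := by rw [hcc e hee he0 he1, h, sub_zero]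
    refine ⟨m, Or.inr ⟨hn, 1-e, l, (idem_aux hee).2.2, hc1e, ?_⟩⟩
    rw [ha, sub_sub_cancel]; module
  · exact ⟨l, Or.inr ⟨hn, e, m, hee, h, ha⟩⟩

theorem ev_unique (c : M → k) (hc0 : c 0 = 0)
    (hcc : ∀ e : M, e*e = e → e ≠ 0 → e ≠ 1 → c (1-e) = 1 - c e)
    {a : M} {l l' : k} (h : EV c a l) (h' : EV c a l') : l = l' := by
  rcases h with h|⟨hn,e,m,hee,hce,ha⟩
  · rcases h' with h'|⟨hn',e',m',hee',hce',ha'⟩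
    · exact nil_unique h h'
    · exact absurd ⟨l, h⟩ hn'
  rcases h' with h'|⟨hn',e',m',hee',hce',ha'⟩
  · exact absurd ⟨l', h'⟩ hn
  -- main case
  have he0 : e ≠ 0 := fun h0 => by rw [h0, hc0] at hce; exact zero_ne_one hce
  have he1 : e ≠ 1 := by
    rintro rfl
    exact hn ⟨l, by rw [ha]; simp⟩
  have hlm : l ≠ m := by
    rintro rfl
    refine hn ⟨l, ?_⟩
    have hs : a = l•(1:M) := by rw [ha]; module
    rw [hs]; simp
  have he0' : e' ≠ 0 := fun h0 => by rw [h0, hc0] at hce'; exact zero_ne_one hce'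
  have he1' : e' ≠ 1 := by
    rintro rfl
    exact hn ⟨l', by rw [ha']; simp⟩
  have hans : ¬ ∃ x : k, a = x • 1 := by
    rintro ⟨x, rfl⟩
    exact hn ⟨x, by simp⟩
  have hcomm : a * e' = e' * a := by
    rw [ha']
    have h1 : (l'•e' + m'•(1-e')) * e' = l'•e' + m'•((1-e')*e') := by
      simp [add_mul, smul_mul_assoc, hee']
    have h2 : e' * (l'•e' + m'•(1-e')) = l'•e' + m'•(e'*(1-e')) := by
      simp [mul_add, mul_smul_comm, hee']
    rw [h1, h2, (idem_aux hee').1, (idem_aux hee').2.1]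
  obtain ⟨x, y, hxy⟩ := centralizer hans hcomm
  have he'comb : e' = (x+y*l)•e + (x+y*m)•(1-e) := by
    rw [hxy, ha]; module
  have hidem := hee'
  rw [he'comb, comb_mul hee] at hidem
  obtain ⟨hP, hQ⟩ := comb_inj hee he0 he1 hidem
  set P := x + y*l with hPdef
  set Q := x + y*m with hQdef
  have hPcases : P = 0 ∨ P = 1 := by
    rcases mul_eq_zero.1 (by linear_combination hP : P*(P-1) = 0) with h|h
    · exact Or.inl h
    · exact Or.inr (by linear_combination h)
  have hQcases : Q = 0 ∨ Q = 1 := by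
    rcases mul_eq_zero.1 (by linear_combination hQ : Q*(Q-1) = 0) with h|h
    · exact Or.inl h
    · exact Or.inr (by linear_combination h)
  rcases hPcases with hP0|hP1 <;> rcases hQcases with hQ0|hQ1
  · -- e' = 0
    exfalso
    rw [hP0, hQ0] at he'comb
    simp at he'comb
    exact he0' he'comb
  · -- e' = 1 - e
    exfalso
    rw [hP0, hQ1] at he'comb
    simp at he'comb
    rw [he'comb, hcc e hee he0 he1] at hce'
    rw [hce] at hce'
    simp at hce'
  · -- e' = e
    rw [hP1, hQ0] at he'comb
    simp at he'comb
    rw [he'comb] at ha'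
    exact (comb_inj hee he0 he1 (ha.symm.trans ha')).1
  · -- e' = 1
    exfalso
    rw [hP1, hQ1] at he'comb
    have : e' = 1 := by rw [he'comb]; module
    exact he1' this

open Classical in
noncomputable def fEV (c : M → k) (a : M) : k :=
  if h : ∃ l, EV c a l then h.choose else 0


theorem fEV_spec [IsAlgClosed k] {c : M → k} (hc0 : c 0 = 0)
    (hcc : ∀ e : M, e*e = e → e ≠ 0 → e ≠ 1 → c (1-e) = 1 - c e)
    {a : M} {l : k} (h : EV c a l) : fEV c a = l := by
  rw [fEV, dif_pos ⟨l, h⟩]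
  exact ev_unique c hc0 hcc (Exists.choose_spec (⟨l, h⟩ : ∃ l, EV c a l)) h

theorem fEV_ev [IsAlgClosed k] {c : M → k}
    (hc01 : ∀ e : M, e*e = e → c e = 0 ∨ c e = 1)
    (hcc : ∀ e : M, e*e = e → e ≠ 0 → e ≠ 1 → c (1-e) = 1 - c e)
    (a : M) : EV c a (fEV c a) := by
  have hex := ev_exists c hc01 hcc a
  rw [fEV, dif_pos hex]
  exact hex.choose_spec

theorem fEV_scalar [IsAlgClosed k] {c : M → k} (hc0 : c 0 = 0)
    (hcc : ∀ e : M, e*e = e → e ≠ 0 → e ≠ 1 → c (1-e) = 1 - c e)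
    (x : k) : fEV c (x•(1:M)) = x :=
  fEV_spec hc0 hcc (Or.inl (by simp))

theorem fEV_comb [IsAlgClosed k] {c : M → k} (hc0 : c 0 = 0)
    (hcc : ∀ e : M, e*e = e → e ≠ 0 → e ≠ 1 → c (1-e) = 1 - c e)
    {e : M} (hee : e*e = e) (he0 : e ≠ 0) (he1 : e ≠ 1) (hce : c e = 1)
    (p q : k) : fEV c (p•e + q•(1-e)) = p := by
  by_cases hpq : p = q
  · subst hpq
    have h : p•e + p•(1-e) = p•(1:M) := by module
    rw [h]; exact fEV_scalar hc0 hcc p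
  · exact fEV_spec hc0 hcc (Or.inr ⟨not_nil_comb hpq hee he0 he1, e, q, hee, hce, rfl⟩)

theorem fEV_idem [IsAlgClosed k] {c : M → k} (hc0 : c 0 = 0)
    (hc01 : ∀ e : M, e*e = e → c e = 0 ∨ c e = 1)
    (hcc : ∀ e : M, e*e = e → e ≠ 0 → e ≠ 1 → c (1-e) = 1 - c e)
    {e : M} (hee : e*e = e) (he0 : e ≠ 0) (he1 : e ≠ 1) :
    fEV c e = c e := by
  rcases hc01 e hee with h|h
  · rw [h]
    have h1e : c (1-e) = 1 := by rw [hcc e hee he0 he1, h, sub_zero]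
    have he' : e = (0:k)•(1-e) + (1:k)•(1-(1-e)) := by rw [sub_sub_cancel]; module
    rw [he']
    exact fEV_comb hc0 hcc (idem_aux hee).2.2
      (fun hh => he1 (by rw [← sub_sub_cancel 1 e, hh, sub_zero]))
      (fun hh => he0 (by rw [← sub_sub_cancel 1 e, hh, sub_self]))
      h1e 0 1
  · rw [h]
    have he' : e = (1:k)•e + (0:k)•(1-e) := by module
    conv_lhs => rw [he']
    exact fEV_comb hc0 hcc hee he0 he1 h 1 0

theorem fEV_poly [IsAlgClosed k] {c : M → k} (hc0 : c 0 = 0)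
    (hcc : ∀ e : M, e*e = e → e ≠ 0 → e ≠ 1 → c (1-e) = 1 - c e)
    {a : M} {l : k} (h : EV c a l) (x y : k) :
    fEV c (x•1 + y•a) = x + y*l ∧ fEV c (x•a + y•(a*a)) = x*l + y*(l*l) := by
  rcases h with h|⟨hn,e,m,hee,hce,ha⟩
  · have h2 : (a - l•1)*(a - l•1) = a*a - (2*l)•a + (l*l)•1 := by
      simp only [sub_mul, mul_sub, Matrix.smul_mul, Matrix.mul_smul, one_mul, mul_one, smul_smul]
      module
    have h3 : a*a = (2*l)•a - (l*l)•1 := by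
      apply sub_eq_zero.1
      have h4 : a*a - ((2*l)•a - (l*l)•1) = a*a - (2*l)•a + (l*l)•1 := by module
      rw [h4, ← h2, h]
    constructor
    · refine fEV_spec hc0 hcc (Or.inl ?_)
      have hd : x•1 + y•a - (x + y*l)•1 = y•(a - l•1) := by module
      rw [hd, smul_mul_smul_comm, h, smul_zero]
    · refine fEV_spec hc0 hcc (Or.inl ?_)
      have hd : x•a + y•(a*a) - (x*l + y*(l*l))•1 = (x + 2*l*y)•(a - l•1) := by
        rw [h3]; module
      rw [hd, smul_mul_smul_comm, h, smul_zero]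
  · have he0 : e ≠ 0 := fun h0 => by
      rw [h0, hc0] at hce; exact zero_ne_one hce
    have he1 : e ≠ 1 := by
      rintro rfl
      exact hn ⟨l, by rw [ha]; simp⟩
    have hlm : l ≠ m := by
      rintro rfl
      refine hn ⟨l, ?_⟩
      have hs : a = l•(1:M) := by rw [ha]; module
      rw [hs]; simp
    have haa : a*a = (l*l)•e + (m*m)•(1-e) := by rw [ha, comb_mul hee]
    constructor
    · have hd : x•1 + y•a = (x+y*l)•e + (x+y*m)•(1-e) := by rw [ha]; module
      rw [hd, fEV_comb hc0 hcc hee he0 he1 hce]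
    · have hd : x•a + y•(a*a) = (x*l+y*(l*l))•e + (x*m+y*(m*m))•(1-e) := by
        rw [haa, ha]; module
      rw [hd, fEV_comb hc0 hcc hee he0 he1 hce]

theorem fEV_hom [IsAlgClosed k] {c : M → k} (hc0 : c 0 = 0)
    (hc01 : ∀ e : M, e*e = e → c e = 0 ∨ c e = 1)
    (hcc : ∀ e : M, e*e = e → e ≠ 0 → e ≠ 1 → c (1-e) = 1 - c e) :
    IsPartialAlgHom k (fEV c) := by
  have hev : ∀ a : M, EV c a (fEV c a) := fEV_ev hc01 hcc
  refine ⟨?_, ?_, ?_, ?_, ?_⟩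
  · have h : (0:M) = (0:k)•(1:M) := by simp
    rw [h]; exact fEV_scalar hc0 hcc 0
  · have h : (1:M) = (1:k)•(1:M) := by simp
    conv_lhs => rw [h]
    exact fEV_scalar hc0 hcc 1
  · intro x a
    have h := (fEV_poly hc0 hcc (hev a) 0 x).1
    rw [zero_smul, zero_add] at h
    rw [h, zero_add]
  · intro a b hab
    by_cases hsa : ∃ s : k, a = s•1
    · obtain ⟨s, rfl⟩ := hsa
      have h : s•(1:M) + b = s•1 + (1:k)•b := by rw [one_smul]
      rw [h, (fEV_poly hc0 hcc (hev b) s 1).1, fEV_scalar hc0 hcc, one_mul]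
    by_cases hsb : ∃ s : k, b = s•1
    · obtain ⟨s, rfl⟩ := hsb
      have h : a + s•(1:M) = s•1 + (1:k)•a := by rw [one_smul, add_comm]
      rw [h, (fEV_poly hc0 hcc (hev a) s 1).1, fEV_scalar hc0 hcc, one_mul, add_comm]
    obtain ⟨x, y, hb⟩ := centralizer hsa hab
    have h : a + b = x•1 + (y+1)•a := by rw [hb]; module
    rw [h, (fEV_poly hc0 hcc (hev a) x (y+1)).1, hb,
      (fEV_poly hc0 hcc (hev a) x y).1]
    ring
  · intro a b hab
    by_cases hsa : ∃ s : k, a = s•1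
    · obtain ⟨s, rfl⟩ := hsa
      have h : s•(1:M) * b = s•b := by rw [Matrix.smul_mul, one_mul]
      have hs := (fEV_poly hc0 hcc (hev b) 0 s).1
      rw [zero_smul, zero_add] at hs
      rw [h, hs, fEV_scalar hc0 hcc, zero_add]
    by_cases hsb : ∃ s : k, b = s•1
    · obtain ⟨s, rfl⟩ := hsb
      have h : a * (s•(1:M)) = s•a := by rw [Matrix.mul_smul, mul_one]
      have hs := (fEV_poly hc0 hcc (hev a) 0 s).1
      rw [zero_smul, zero_add] at hs
      rw [h, hs, fEV_scalar hc0 hcc]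
      ring
    obtain ⟨x, y, hb⟩ := centralizer hsa hab
    have h : a * b = x•a + y•(a*a) := by
      rw [hb, mul_add, Matrix.mul_smul, mul_one, Matrix.mul_smul]
    rw [h, (fEV_poly hc0 hcc (hev a) x y).2, hb,
      (fEV_poly hc0 hcc (hev a) x y).1]
    ring


theorem hom_sub {f : M → k} (hf : IsPartialAlgHom k f) {e : M} (hee : e*e = e) :
    f (1 - e) = 1 - f e := by
  obtain ⟨hf0, hf1, hfs, hfa, hfm⟩ := hf
  have hcomm : e * (1-e) = (1-e) * e := by rw [(idem_aux hee).1, (idem_aux hee).2.1]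
  have h := hfa e (1-e) hcomm
  rw [add_sub_cancel, hf1] at h
  linear_combination -h

theorem hom_val_nil {f : M → k} (hf : IsPartialAlgHom k f) {a : M} {l : k}
    (h : (a - l•1)*(a - l•1) = 0) : f a = l := by
  obtain ⟨hf0, hf1, hfs, hfa, hfm⟩ := hf
  have hn : f (a - l•1) = 0 := by
    have hm := hfm (a - l•1) (a - l•1) rfl
    rw [h, hf0] at hm
    exact mul_self_eq_zero.1 hm.symm
  have hcomm : (l•(1:M)) * (a - l•1) = (a - l•1) * (l•1) := by
    rw [Matrix.smul_mul, Matrix.mul_smul, one_mul, mul_one]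
  have hsum := hfa (l•1) (a - l•1) hcomm
  have hid : l•(1:M) + (a - l•1) = a := by module
  rw [hid, hn, add_zero] at hsum
  rw [hsum, hfs, hf1, mul_one]

theorem hom_val_comb {f : M → k} (hf : IsPartialAlgHom k f) {e : M} (hee : e*e = e)
    (l m : k) : f (l•e + m•(1-e)) = l * f e + m * (1 - f e) := by
  have hs : f (1 - e) = 1 - f e := hom_sub hf hee
  obtain ⟨hf0, hf1, hfs, hfa, hfm⟩ := hf
  have i := idem_aux hee
  have hcomm : (l•e) * (m•(1-e)) = (m•(1-e)) * (l•e) := by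
    rw [Matrix.smul_mul, Matrix.mul_smul, Matrix.smul_mul, Matrix.mul_smul, i.1, i.2.1]
    simp
  have h := hfa (l•e) (m•(1-e)) hcomm
  rw [h, hfs, hfs, hs]

theorem hom_ext [IsAlgClosed k] {f g : M → k} (hf : IsPartialAlgHom k f)
    (hg : IsPartialAlgHom k g) (hidem : ∀ e : M, e*e = e → f e = g e) : f = g := by
  funext a
  rcases decomp a with ⟨l, h⟩|⟨l, m, e, hlm, hee, ha⟩
  · rw [hom_val_nil hf h, hom_val_nil hg h]
  · rw [ha, hom_val_comb hf hee, hom_val_comb hg hee, hidem e hee]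

theorem partialAlgHom_matrix_two' [IsAlgClosed k]
    (I : Set (Matrix (Fin 2) (Fin 2) k))
    (hpart : {e : Matrix (Fin 2) (Fin 2) k | e * e = e} =
      ({0, 1} : Set (Matrix (Fin 2) (Fin 2) k)) ∪ I ∪ (fun e => 1 - e) '' I)
    (hd0 : Disjoint ({0, 1} : Set (Matrix (Fin 2) (Fin 2) k)) I)
    (hd1 : Disjoint ({0, 1} : Set (Matrix (Fin 2) (Fin 2) k)) ((fun e => 1 - e) '' I))
    (hd2 : Disjoint I ((fun e => 1 - e) '' I)) :
    (∀ α : I → k, (∀ e, α e = 0 ∨ α e = 1) →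
      ∃ f : Matrix (Fin 2) (Fin 2) k → k, IsPartialAlgHom k f ∧ ∀ e : I, f e = α e) ∧
    Set.BijOn (fun (f : Matrix (Fin 2) (Fin 2) k → k) => fun e : I => f e)
      {f | IsPartialAlgHom k f} {α : I → k | ∀ e, α e = 0 ∨ α e = 1} := by
  classical
  have hIidem : ∀ e ∈ I, e * e = e := fun e he =>
    (Set.ext_iff.1 hpart e).2 (Or.inl (Or.inr he))
  have hI0 : (0 : M) ∉ I := Set.disjoint_left.1 hd0 (by simp)
  have hI1 : (1 : M) ∉ I := Set.disjoint_left.1 hd0 (by simp)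
  have hIne0 : ∀ e ∈ I, e ≠ (0:M) := fun e he h => hI0 (h ▸ he)
  have hIne1 : ∀ e ∈ I, e ≠ (1:M) := fun e he h => hI1 (h ▸ he)
  have hImg : ∀ e ∈ I, (1 - e) ∉ I := fun e he h1e =>
    Set.disjoint_left.1 hd2 h1e ⟨e, he, rfl⟩
  have parta : ∀ α : I → k, (∀ e, α e = 0 ∨ α e = 1) →
      ∃ f : Matrix (Fin 2) (Fin 2) k → k, IsPartialAlgHom k f ∧ ∀ e : I, f e = α e := by
    intro α hα
    set c : M → k := fun e =>
      if h : e ∈ I then α ⟨e, h⟩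
      else if h2 : (1 - e) ∈ I then 1 - α ⟨1 - e, h2⟩
      else if e = 1 then 1 else 0 with hcdef
    have hce : ∀ (e : M) (he : e ∈ I), c e = α ⟨e, he⟩ := by
      intro e he; simp only [hcdef]; rw [dif_pos he]
    have hc1e : ∀ (e : M) (he : e ∈ I), c (1 - e) = 1 - α ⟨e, he⟩ := by
      intro e he
      simp only [hcdef]
      rw [dif_neg (hImg e he), dif_pos (show 1 - (1 - e) ∈ I by rw [sub_sub_cancel]; exact he)]
      congr 1
      exact congrArg α (Subtype.ext (sub_sub_cancel 1 e))
    have hc0 : c 0 = 0 := by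
      simp only [hcdef]
      rw [dif_neg hI0, dif_neg (show ¬((1:M) - 0 ∈ I) by rw [sub_zero]; exact hI1),
        if_neg (zero_ne_one (α := M))]
    have hc1 : c 1 = 1 := by
      simp only [hcdef]
      rw [dif_neg hI1, dif_neg (show ¬((1:M) - 1 ∈ I) by rw [sub_self]; exact hI0)]
      simp
    have hc01 : ∀ e : M, e*e = e → c e = 0 ∨ c e = 1 := by
      intro e hee
      rcases (Set.ext_iff.1 hpart e).1 hee with (h|h)|⟨e₀, he₀, heq⟩
      · rcases h with h|h
        · rw [h, hc0]; exact Or.inl rfl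
        · rw [h, hc1]; exact Or.inr rfl
      · rw [hce e h]; exact hα ⟨e, h⟩
      · rw [← heq, hc1e e₀ he₀]
        rcases hα ⟨e₀, he₀⟩ with h|h
        · rw [h, sub_zero]; exact Or.inr rfl
        · rw [h, sub_self]; exact Or.inl rfl
    have hcc : ∀ e : M, e*e = e → e ≠ 0 → e ≠ 1 → c (1-e) = 1 - c e := by
      intro e hee he0 he1
      rcases (Set.ext_iff.1 hpart e).1 hee with (h|h)|⟨e₀, he₀, heq⟩
      · rcases h with h|h
        · exact absurd h he0
        · exact absurd h he1
      · rw [hc1e e h, hce e h]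
      · have h1e : 1 - e = e₀ := by rw [← heq, sub_sub_cancel]
        rw [h1e, hce e₀ he₀, ← heq, hc1e e₀ he₀]
        ring
    refine ⟨fEV c, fEV_hom hc0 hc01 hcc, fun e => ?_⟩
    rw [fEV_idem hc0 hc01 hcc (hIidem e e.2) (hIne0 e e.2) (hIne1 e e.2), hce e e.2]
  refine ⟨parta, ?_, ?_, ?_⟩
  · -- MapsTo
    intro f hf e
    have h := hf.2.2.2.2 e e rfl
    rw [hIidem e e.2] at h
    have h2 : f e * (f e - 1) = 0 := by linear_combination -h
    rcases mul_eq_zero.1 h2 with h3|h3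
    · exact Or.inl h3
    · exact Or.inr (by linear_combination h3)
  · -- InjOn
    intro f hf g hg heq
    refine hom_ext hf hg ?_
    intro e hee
    rcases (Set.ext_iff.1 hpart e).1 hee with (h|h)|⟨e₀, he₀, heq'⟩
    · rcases h with h|h
      · rw [h, hf.1, hg.1]
      · rw [h, hf.2.1, hg.2.1]
    · exact congrFun heq ⟨e, h⟩
    · have h2 : f e₀ = g e₀ := congrFun heq ⟨e₀, he₀⟩
      rw [← heq', hom_sub hf (hIidem e₀ he₀), hom_sub hg (hIidem e₀ he₀), h2]
  · -- SurjOn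
    intro α hα
    obtain ⟨f, hf, hres⟩ := parta α hα
    exact ⟨f, hf, funext fun e => hres e⟩

end PartialAlgHomAux

/-- For `A = M₂(k)` over an algebraically closed field and a transversal `𝓘` of the
nontrivial idempotents of `A` (so that the idempotents of `A` are partitioned as
`{0,1} ⊔ 𝓘 ⊔ (1 - 𝓘)`): (a) every `{0,1}`-valued function on `𝓘` extends to a morphism
of partial `k`-algebras `A → k`, and (b) restriction to `𝓘` is a bijection from the set
of morphisms of partial `k`-algebras `A → k` onto the set of `{0,1}`-valued functions on
`𝓘` (equivalently, the assignment `α ↦ f_α` is a bijection). -/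

theorem partialAlgHom_matrix_two {k : Type*} [Field k] [IsAlgClosed k]
    (I : Set (Matrix (Fin 2) (Fin 2) k))
    (hpart : {e : Matrix (Fin 2) (Fin 2) k | e * e = e} =
      ({0, 1} : Set (Matrix (Fin 2) (Fin 2) k)) ∪ I ∪ (fun e => 1 - e) '' I)
    (hd0 : Disjoint ({0, 1} : Set (Matrix (Fin 2) (Fin 2) k)) I)
    (hd1 : Disjoint ({0, 1} : Set (Matrix (Fin 2) (Fin 2) k)) ((fun e => 1 - e) '' I))
    (hd2 : Disjoint I ((fun e => 1 - e) '' I)) :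
    (∀ α : I → k, (∀ e, α e = 0 ∨ α e = 1) →
      ∃ f : Matrix (Fin 2) (Fin 2) k → k, IsPartialAlgHom k f ∧ ∀ e : I, f e = α e) ∧
    Set.BijOn (fun (f : Matrix (Fin 2) (Fin 2) k → k) => fun e : I => f e)
      {f | IsPartialAlgHom k f} {α : I → k | ∀ e, α e = 0 ∨ α e = 1} := by
  exact PartialAlgHomAux.partialAlgHom_matrix_two' I hpart hd0 hd1 hd2
end

section
/- Let k be an algebraically closed field and let R be a (possibly noncommutative, unital, associative) k-algebra in which every element is algebraic over k (for example, R finite dimensional over k). If f, g : R → k are morphisms of partial k-algebras that agree on every idempotent of R (i.e. f(e) = g(e) whenever e*e = e), then f = g. -/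
open Polynomial in
lemma partialAlgHom_aeval {k : Type*} {R : Type*} [CommRing k] [Ring R] [Algebra k R]
    {f : R → k} (hf : IsPartialAlgHom k f) (r : R) (P : k[X]) :
    f (aeval r P) = P.eval (f r) := by
  obtain ⟨hf0, hf1, hfs, hfa, hfm⟩ := hf
  have hcomm : ∀ P Q : k[X], (aeval r P) * (aeval r Q) = (aeval r Q) * (aeval r P) := by
    intro P Q; rw [← map_mul, ← map_mul, mul_comm]
  have hpow : ∀ n : ℕ, f (r ^ n) = (f r) ^ n := by
    intro n
    induction n with
    | zero => simpa using hf1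
    | succ n ih =>
      rw [pow_succ, hfm _ _ (pow_mul_comm' r n), ih, pow_succ]
  induction P using Polynomial.induction_on' with
  | add p q hp hq =>
    rw [map_add, hfa _ _ (hcomm p q), hp, hq, Polynomial.eval_add]
  | monomial n c =>
    have : (aeval r) (monomial n c) = c • r ^ n := by
      rw [aeval_monomial, Algebra.smul_def]
    rw [this, hfs, hpow, eval_monomial]

open Polynomial

/-- Over an algebraically closed field `k`, a morphism of partial `k`-algebras from an
algebraic `k`-algebra `R` to `k` is determined by its values on idempotents. -/
theorem partialAlgHom_eq_of_idempotents {k : Type*} [Field k] [IsAlgClosed k]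
    {R : Type*} [Ring R] [Algebra k R] (halg : ∀ r : R, IsAlgebraic k r)
    (f g : R → k) (hf : IsPartialAlgHom k f) (hg : IsPartialAlgHom k g)
    (h : ∀ e : R, e * e = e → f e = g e) : f = g := by
  funext r
  by_contra hne
  set p := minpoly k r with hp
  have hint : IsIntegral k r := (halg r).isIntegral
  have hp0 : p ≠ 0 := minpoly.ne_zero hint
  have haev : aeval r p = 0 := minpoly.aeval k r
  have hfr : p.eval (f r) = 0 := by
    rw [← partialAlgHom_aeval hf r p, haev, hf.1]
  have hgr : p.eval (g r) = 0 := by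
    rw [← partialAlgHom_aeval hg r p, haev, hg.1]
  set m := p.rootMultiplicity (f r) with hm
  set q := p /ₘ (X - C (f r)) ^ m with hq
  have hfact : (X - C (f r)) ^ m * q = p := p.pow_mul_divByMonic_rootMultiplicity_eq (f r)
  have hqfr : q.eval (f r) ≠ 0 := eval_divByMonic_pow_rootMultiplicity_ne_zero (f r) hp0
  have hmpos : 0 < m := (p.rootMultiplicity_pos hp0).2 hfr
  -- coprimality
  have hcop : IsCoprime ((X - C (f r)) ^ m) q := by
    refine IsCoprime.pow_left ?_
    rw [(prime_X_sub_C (f r)).coprime_iff_not_dvd, dvd_iff_isRoot]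
    exact hqfr
  obtain ⟨u, v, huv⟩ := hcop
  set e := aeval r (v * q) with he
  have hid : e * e = e := by
    have key : (v * q) * (v * q) = v * q - (v * u) * ((X - C (f r)) ^ m * q) := by
      have h1 : v * q = 1 - u * (X - C (f r)) ^ m := by linear_combination huv
      ring_nf
      linear_combination (v * q) * h1
    rw [hfact] at key
    have hz : aeval r (v * u * p) = 0 := by rw [map_mul, haev, mul_zero]
    rw [he, ← map_mul, key, map_sub, hz, sub_zero]
  have hfe : f e = 1 := by
    rw [he, partialAlgHom_aeval hf r]
    have : ((X - C (f r)) ^ m).eval (f r) = 0 := by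
      simp [zero_pow hmpos.ne']
    calc (v * q).eval (f r)
        = (u * (X - C (f r)) ^ m + v * q).eval (f r) := by simp [this]
      _ = 1 := by rw [huv, eval_one]
  have hge : g e = 0 := by
    rw [he, partialAlgHom_aeval hg r]
    have hq0 : q.eval (g r) = 0 := by
      have := hfact
      have h2 : ((X - C (f r)) ^ m * q).eval (g r) = 0 := by rw [hfact, hgr]
      rw [eval_mul] at h2
      rcases mul_eq_zero.mp h2 with h3 | h3
      · exfalso
        apply hne
        have : (g r - f r) ^ m = 0 := by simpa using h3
        have := pow_eq_zero_iff hmpos.ne' |>.mp this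
        exact (sub_eq_zero.mp this).symm
      · exact h3
    simp [hq0]
  rw [h e hid, hge] at hfe
  exact zero_ne_one hfe
end

section
/- There is no contravariant functor F from the category of (possibly noncommutative) rings to the category of sets whose restriction to the full subcategory of commutative rings is naturally isomorphic to the prime spectrum functor Spec and which satisfies either of the following conditions: (1) for some field k and some integer n ≥ 2, the set F(Mₙ(k)) has exactly one element; (2) F is Morita invariant, i.e. F(R) is in bijection with F(S) whenever R and S are Morita equivalent rings (so that in particular F(Mₙ(k)) ≅ F(k) for every field k and n ≥ 2). -/
/-!
If `F (Mₙ(k))` is a single point `x`, then for the diagonal embedding `i : kⁿ → Mₙ(k)` the point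
`F(i)(x) ∈ Spec kⁿ` is fixed by every endomorphism `g` of `kⁿ` that extends along `i` to an
endomorphism `σ` of `Mₙ(k)`, since `F(σ)` must fix `x`. Permuting the coordinates cyclically is
such a `g` (it extends to conjugation by the permutation matrix), yet it fixes no prime of `kⁿ`:
every prime of `kⁿ` is the preimage of a prime of `k` under a unique projection. Morita
invariance is ruled out by the same argument, as it would give `F (M₂(ℚ)) ≃ F ℚ ≃ Spec ℚ`,
which is a point.
-/

open CategoryTheory

open Opposite

theorem finRotate_apply_ne_self {n : ℕ} (hn : 2 ≤ n) (i : Fin n) : finRotate n i ≠ i :=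
  Equiv.Perm.mem_support.mp (support_finRotate_of_le hn ▸ Finset.mem_univ i)

theorem PrimeSpectrum.comap_pi_evalRingHom_ne_self {ι R : Type*} [Finite ι] [CommRing R]
    {π : ι → ι} (hπ : ∀ i, π i ≠ i) (p : PrimeSpectrum (ι → R)) :
    comap (RingHom.pi fun i ↦ Pi.evalRingHom (fun _ ↦ R) (π i)) p ≠ p := by
  obtain ⟨i, q, rfl⟩ := exists_comap_evalRingHom_eq p
  intro heq
  rw [← comap_comp_apply] at heq
  exact hπ i <| congrArg Sigma.fst <|
    sigmaToPi_injective (fun _ ↦ R) (a₁ := ⟨π i, q⟩) (a₂ := ⟨i, q⟩) heq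

section SpecExtension

variable (F : RingCatᵒᵖ ⥤ Type) (h : (forget₂ CommRingCat RingCat).op ⋙ F ≅ SpecFunctor)
include h

theorem exists_comap_eq_self_of_subsingleton {A R : Type} [CommRing A] [Ring R]
    [Nonempty (F.obj (op (RingCat.of R)))] [Subsingleton (F.obj (op (RingCat.of R)))]
    (i : A →+* R) (g : A →+* A) (σ : R →+* R) (hσ : σ.comp i = i.comp g) :
    ∃ p : PrimeSpectrum A, PrimeSpectrum.comap g p = p := by
  obtain ⟨x⟩ := ‹Nonempty (F.obj (op (RingCat.of R)))›
  let y := F.map (RingCat.ofHom i).op x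
  have hy : F.map (RingCat.ofHom g).op y = y := calc
    _ = F.map (RingCat.ofHom (σ.comp i)).op x := by
      rw [← Functor.map_comp_apply, ← op_comp, ← RingCat.ofHom_comp, hσ]
    _ = y := by
      rw [RingCat.ofHom_comp, op_comp, Functor.map_comp_apply, Subsingleton.elim (F.map _ x) x]
  exact ⟨h.hom.app (op (CommRingCat.of A)) y,
    (NatTrans.naturality_apply h.hom (CommRingCat.ofHom g).op y).symm.trans (congrArg _ hy)⟩

theorem not_nonempty_unique_matrix (k : Type) [CommRing k] {ι : Type} [Fintype ι]
    [DecidableEq ι] (π : Equiv.Perm ι) (hπ : ∀ i, π i ≠ i) :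
    ¬ Nonempty (Unique (F.obj (op (RingCat.of (Matrix ι ι k))))) := by
  rintro ⟨_⟩
  have hσ : (Matrix.reindexRingEquiv k π.symm).toRingHom.comp (Matrix.diagonalRingHom ι k) =
      (Matrix.diagonalRingHom ι k).comp
        (RingHom.pi fun i ↦ Pi.evalRingHom (fun _ ↦ k) (π i)) := by
    ext d : 1
    simp [Matrix.reindex_apply]
  obtain ⟨p, hp⟩ := exists_comap_eq_self_of_subsingleton F h _ _ _ hσ
  exact PrimeSpectrum.comap_pi_evalRingHom_ne_self hπ p hp

theorem nonempty_unique_of_field (k : Type) [Field k] :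
    Nonempty (Unique (F.obj (op (RingCat.of k)))) :=
  ⟨(h.app (op (CommRingCat.of k))).toEquiv.unique (β := PrimeSpectrum k)⟩

end SpecExtension

/-- There is no contravariant functor `F` from rings to sets restricting (up to natural
isomorphism) to `Spec` on commutative rings which satisfies either of:
(1) `F (Mₙ(k))` is a singleton for some field `k` and some `n ≥ 2`; or
(2) `F` is Morita invariant, i.e. `F R ≃ F S` whenever the module categories of `R` and
`S` are equivalent. -/
theorem no_morita_invariant_spec_functor (F : RingCatᵒᵖ ⥤ Type)
    (h : (forget₂ CommRingCat RingCat).op ⋙ F ≅ SpecFunctor) :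
    ¬ ((∃ (k : Type) (_ : Field k) (n : ℕ), 2 ≤ n ∧
          Nonempty (Unique (F.obj (Opposite.op (RingCat.of (Matrix (Fin n) (Fin n) k)))))) ∨
       (∀ R S : RingCat, Nonempty (ModuleCat.{0} ↥R ≌ ModuleCat.{0} ↥S) →
          Nonempty (F.obj (Opposite.op R) ≃ F.obj (Opposite.op S)))) := by
  rintro (⟨k, _, n, hn, hu⟩ | hMorita)
  · exact not_nonempty_unique_matrix F h k _ (finRotate_apply_ne_self hn) hu
  · obtain ⟨e⟩ := hMorita (.of ℚ) (.of (Matrix (Fin 2) (Fin 2) ℚ))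
      ⟨ModuleCat.matrixEquivalence ℚ 0⟩
    obtain ⟨_⟩ := nonempty_unique_of_field F h ℚ
    exact not_nonempty_unique_matrix F h ℚ _ (finRotate_apply_ne_self le_rfl) ⟨e.symm.unique⟩
end
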